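/- arXiv:2602.08177 — 10 statements merged into one kernel-verified Lean document; each statement's English description precedes it below -/
import Mathlib

section
/- Let f : ℝⁿ → ℝ be Lipschitz continuous near x̄ ∈ ℝⁿ and suppose 0 ∉ ∇̄f(x̄). Then ∇̂f(x̄) = { v/|v| : v ∈ ∇̄f(x̄) }. -/
open Filter Topology
open scoped RealInnerProductSpace ENNReal

/-- The auxiliary normalized gradient map `∇̃f` from the paper: a singleton containing the
normalized gradient at differentiability points with nonzero gradient, `{0}` where `f` is
locally constant, and empty otherwise. -/
noncomputable def tGrad {n : ℕ} (f : EuclideanSpace ℝ (Fin n) → ℝ)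
    (x : EuclideanSpace ℝ (Fin n)) : Set (EuclideanSpace ℝ (Fin n)) :=
  {v | (DifferentiableAt ℝ f x ∧ gradient f x ≠ 0 ∧ v = ‖gradient f x‖⁻¹ • gradient f x) ∨
       ((∀ᶠ y in 𝓝 x, f y = f x) ∧ v = 0)}

/-- The normalized subdifferential `∇̂f`: the graph closure of `∇̃f`. -/
noncomputable def hGrad {n : ℕ} (f : EuclideanSpace ℝ (Fin n) → ℝ)
    (x : EuclideanSpace ℝ (Fin n)) : Set (EuclideanSpace ℝ (Fin n)) :=
  {v | ∃ xs vs : ℕ → EuclideanSpace ℝ (Fin n),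
      (∀ k, vs k ∈ tGrad f (xs k)) ∧ Tendsto xs atTop (𝓝 x) ∧ Tendsto vs atTop (𝓝 v)}

/-- The Bouligand subdifferential `∇̄f`: limits of gradients along sequences of
differentiability points. -/
noncomputable def bGrad {n : ℕ} (f : EuclideanSpace ℝ (Fin n) → ℝ)
    (x : EuclideanSpace ℝ (Fin n)) : Set (EuclideanSpace ℝ (Fin n)) :=
  {v | ∃ xs : ℕ → EuclideanSpace ℝ (Fin n),
      (∀ k, DifferentiableAt ℝ f (xs k)) ∧ Tendsto xs atTop (𝓝 x) ∧
      Tendsto (fun k => gradient f (xs k)) atTop (𝓝 v)}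


/-- Continuity of normalization at a nonzero limit. -/
lemma tendsto_normalize_aux {n : ℕ} {g : ℕ → EuclideanSpace ℝ (Fin n)}
    {v : EuclideanSpace ℝ (Fin n)} (hg : Tendsto g atTop (𝓝 v)) (hv : v ≠ 0) :
    Tendsto (fun k => ‖g k‖⁻¹ • g k) atTop (𝓝 (‖v‖⁻¹ • v)) :=
  ((hg.norm.inv₀ (norm_ne_zero_iff.2 hv))).smul hg

lemma locallyConst_aux {n : ℕ} {f : EuclideanSpace ℝ (Fin n) → ℝ}
    {x : EuclideanSpace ℝ (Fin n)} (h : ∀ᶠ y in 𝓝 x, f y = f x) :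
    DifferentiableAt ℝ f x ∧ gradient f x = 0 := by
  have heq : f =ᶠ[𝓝 x] fun _ => f x := h
  exact ⟨(differentiableAt_const (f x)).congr_of_eventuallyEq heq,
    by rw [heq.gradient_eq, gradient_fun_const]⟩

/-- If `f` is Lipschitz continuous near `xb` and `0 ∉ ∇̄f(xb)`, then
`∇̂f(xb) = { v/‖v‖ : v ∈ ∇̄f(xb) }`. -/
theorem stmt1 {n : ℕ} (f : EuclideanSpace ℝ (Fin n) → ℝ) (xb : EuclideanSpace ℝ (Fin n))
    (hf : ∃ K : NNReal, ∃ s ∈ 𝓝 xb, LipschitzOnWith K f s)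
    (h0 : (0 : EuclideanSpace ℝ (Fin n)) ∉ bGrad f xb) :
    hGrad f xb = {u | ∃ v ∈ bGrad f xb, u = ‖v‖⁻¹ • v} := by
  obtain ⟨K, s, hs, hlip⟩ := hf
  ext u
  simp only [Set.mem_setOf_eq]
  constructor
  · rintro ⟨xs, vs, hmem, hxs, hvs⟩
    -- eventually in case 1
    have hc1 : ∀ᶠ k in atTop, DifferentiableAt ℝ f (xs k) ∧ gradient f (xs k) ≠ 0 ∧
        vs k = ‖gradient f (xs k)‖⁻¹ • gradient f (xs k) := by
      by_contra hcon
      rw [not_eventually] at hcon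
      have hfreq : ∃ᶠ k in atTop, DifferentiableAt ℝ f (xs k) ∧ gradient f (xs k) = 0 := by
        refine hcon.mono fun k hk => ?_
        rcases hmem k with h1 | h2
        · exact absurd h1 hk
        · exact locallyConst_aux h2.1
      obtain ⟨φ, hφ, hφP⟩ := extraction_of_frequently_atTop hfreq
      refine h0 ⟨xs ∘ φ, fun k => (hφP k).1, hxs.comp hφ.tendsto_atTop, ?_⟩
      have : (fun k => gradient f (xs (φ k))) = fun _ => 0 := funext fun k => (hφP k).2
      rw [show (fun k => gradient f ((xs ∘ φ) k)) = fun _ => (0 : EuclideanSpace ℝ (Fin n))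
        from funext fun k => (hφP k).2]
      exact tendsto_const_nhds
    -- eventually bounded gradients
    have hint : ∀ᶠ k in atTop, xs k ∈ interior s := hxs (interior_mem_nhds.mpr hs)
    have hbd : ∀ᶠ k in atTop, ‖gradient f (xs k)‖ ≤ (K : ℝ) := by
      filter_upwards [hint] with k hk
      have hsk : s ∈ 𝓝 (xs k) := mem_interior_iff_mem_nhds.1 hk
      have := norm_fderiv_le_of_lipschitzOn ℝ hsk hlip
      rwa [show ‖gradient f (xs k)‖ = ‖fderiv ℝ f (xs k)‖ from
        (InnerProductSpace.toDual ℝ _).symm.norm_map _]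
    obtain ⟨N, hN⟩ := eventually_atTop.1 (hc1.and hbd)
    set g : ℕ → EuclideanSpace ℝ (Fin n) := fun k => gradient f (xs (k + N)) with hg
    have hgball : ∀ k, g k ∈ Metric.closedBall (0 : EuclideanSpace ℝ (Fin n)) K := fun k =>
      mem_closedBall_zero_iff.2 (hN (k + N) (Nat.le_add_left N k)).2
    obtain ⟨v, -, φ, hφ, hgφ⟩ := (isCompact_closedBall (0 : EuclideanSpace ℝ (Fin n)) K).tendsto_subseq hgball
    have htφ : Tendsto (fun k => φ k + N) atTop atTop :=
      (tendsto_add_atTop_nat N).comp hφ.tendsto_atTop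
    have hvB : v ∈ bGrad f xb := by
      refine ⟨fun k => xs (φ k + N), fun k => (hN (φ k + N) (Nat.le_add_left N (φ k))).1.1,
        hxs.comp htφ, hgφ⟩
    have hvne : v ≠ 0 := fun h => h0 (h ▸ hvB)
    refine ⟨v, hvB, ?_⟩
    have h1 : Tendsto (fun k => vs (φ k + N)) atTop (𝓝 u) := hvs.comp htφ
    have h2 : Tendsto (fun k => vs (φ k + N)) atTop (𝓝 (‖v‖⁻¹ • v)) := by
      have heq : ∀ k, vs (φ k + N) = ‖g (φ k)‖⁻¹ • g (φ k) := fun k =>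
        (hN (φ k + N) (Nat.le_add_left N (φ k))).1.2.2
      rw [show (fun k => vs (φ k + N)) = fun k => ‖g (φ k)‖⁻¹ • g (φ k) from funext heq]
      exact tendsto_normalize_aux hgφ hvne
    exact tendsto_nhds_unique h1 h2
  · rintro ⟨v, ⟨xs, hdiff, hxs, hg⟩, rfl⟩
    have hvne : v ≠ 0 := fun h => h0 (h ▸ ⟨xs, hdiff, hxs, hg⟩)
    obtain ⟨N, hN⟩ := eventually_atTop.1 (hg.eventually_ne hvne)
    refine ⟨fun k => xs (k + N), fun k => ‖gradient f (xs (k + N))‖⁻¹ • gradient f (xs (k + N)),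
      fun k => Or.inl ⟨hdiff _, hN _ (Nat.le_add_left N k), rfl⟩,
      hxs.comp (tendsto_add_atTop_nat N), ?_⟩
    exact tendsto_normalize_aux (hg.comp (tendsto_add_atTop_nat N)) hvne
end

section
/- If f : ℝⁿ → ℝ is locally Lipschitz, then for every x ∈ ℝⁿ the set ∇̂f(x) is nonempty; moreover ∇̂f is locally bounded (its values are contained in the closed Euclidean unit ball) and its graph {(x,v) : v ∈ ∇̂f(x)} is closed in ℝⁿ × ℝⁿ. -/
open Filter Topology
open scoped RealInnerProductSpace ENNReal

section Aux

open Filter Topology MeasureTheory Metric Function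
open scoped Convolution NNReal

variable {n : ℕ}

local notation "E" => EuclideanSpace ℝ (Fin n)

lemma aux_const {f : E → ℝ} {K : ℝ≥0} {x : E} {r : ℝ}
    (hl : LipschitzOnWith K f (Metric.ball x r))
    (h0 : ∀ y ∈ Metric.ball x r, DifferentiableAt ℝ f y → fderiv ℝ f y = 0) :
    ∀ y ∈ Metric.ball x r, f y = f x := by
  intro y hy
  have hyr : dist y x < r := mem_ball.1 hy
  have hr : 0 < r := lt_of_le_of_lt dist_nonneg hyr
  obtain ⟨F, hF, hFf⟩ := hl.extend_real
  have hFx : F x = f x := (hFf (mem_ball_self hr)).symm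
  have hFy : F y = f y := (hFf hy).symm
  have hFc : Continuous F := hF.continuous
  have hFi : LocallyIntegrable F volume := hFc.locallyIntegrable
  have hae : ∀ᵐ z : E, DifferentiableAt ℝ F z ∧ (z ∈ ball x r → fderiv ℝ F z = 0) := by
    filter_upwards [hF.ae_differentiableAt] with z hz
    refine ⟨hz, fun hzb => ?_⟩
    have heq : f =ᶠ[𝓝 z] F := eventually_of_mem (isOpen_ball.mem_nhds hzb) hFf
    have hdf : DifferentiableAt ℝ f z := hz.congr_of_eventuallyEq heq
    rw [← heq.fderiv_eq]
    exact h0 z hzb hdf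
  suffices H : ∀ ε > 0, |F y - F x| ≤ ε by
    have h00 : |F y - F x| ≤ 0 := by
      by_contra hcon
      push_neg at hcon
      have := H (|F y - F x| / 2) (by linarith)
      linarith
    have := abs_nonneg (F y - F x)
    have : F y = F x := by
      have : |F y - F x| = 0 := le_antisymm h00 (abs_nonneg _)
      have := abs_eq_zero.1 this
      linarith [sub_eq_zero.1 this]
    rw [← hFx, ← hFy, this]
  intro ε hε
  set δ₀ : ℝ := r - dist y x with hδ₀def
  have hδ₀ : 0 < δ₀ := by simp [hδ₀def]; linarith
  set δ : ℝ := min (δ₀ / 2) (ε / (2 * K + 1)) with hδdef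
  have hK0 : (0 : ℝ) ≤ K := K.coe_nonneg
  have hδpos : 0 < δ := lt_min (by linarith) (by positivity)
  have hδlt : δ < δ₀ := lt_of_le_of_lt (min_le_left _ _) (by linarith)
  have hδε : δ ≤ ε / (2 * K + 1) := min_le_right _ _
  have hyb : y ∈ ball x (r - δ) := by
    rw [mem_ball]
    simp only [hδ₀def] at hδlt
    linarith
  have hxb : x ∈ ball x (r - δ) := by
    rw [mem_ball, dist_self]
    have : δ₀ ≤ r := by simp [hδ₀def]
    linarith
  set φ : ContDiffBump (0 : E) := ⟨δ / 2, δ, by positivity, by linarith⟩ with hφdef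
  set ψ : E → ℝ := φ.normed volume with hψdef
  have hψc : HasCompactSupport ψ := φ.hasCompactSupport_normed
  have hψsm : ContDiff ℝ (↑(⊤ : ℕ∞)) ψ := φ.contDiff_normed
  have h1n : (1 : WithTop ℕ∞) ≤ ↑(⊤ : ℕ∞) := by exact_mod_cast le_top
  -- Step 1: the smoothed function has zero derivative on ball x (r - δ)
  have key : ∀ x₀ ∈ ball x (r - δ),
      HasFDerivAt (F ⋆[ContinuousLinearMap.lsmul ℝ ℝ, volume] ψ) (0 : E →L[ℝ] ℝ) x₀ := by
    intro x₀ hx₀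
    have HD := hψc.hasFDerivAt_convolution_right (ContinuousLinearMap.lsmul ℝ ℝ) hFi
      (hψsm.of_le h1n) x₀
    have hzero : ((F ⋆[(ContinuousLinearMap.lsmul ℝ ℝ).precompR E, volume] fderiv ℝ ψ) x₀)
        = (0 : E →L[ℝ] ℝ) := by
      ext v
      rw [ContinuousLinearMap.zero_apply]
      rw [convolution_precompR_apply _ hFi (hψc.fderiv ℝ)
        ((hψsm.of_le h1n).continuous_fderiv one_ne_zero)]
      set G : E → ℝ := fun z => ψ (x₀ - z) with hGdef
      have Gcs : HasCompactSupport G := hψc.comp_homeomorph (Homeomorph.subLeft x₀)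
      have Gsm : ContDiff ℝ (↑(⊤ : ℕ∞)) G := hψsm.comp (contDiff_const.sub contDiff_id)
      obtain ⟨D, GLip⟩ := Gsm.lipschitzWith_of_hasCompactSupport Gcs (by simp)
      have hline : ∀ z : E, lineDeriv ℝ G z (-v) = fderiv ℝ ψ (x₀ - z) v := by
        intro z
        have hψd : HasFDerivAt ψ (fderiv ℝ ψ (x₀ - z)) (x₀ - z) :=
          ((hψsm.differentiable (by simp)) (x₀ - z)).hasFDerivAt
        have hψl : HasLineDerivAt ℝ ψ (fderiv ℝ ψ (x₀ - z) v) (x₀ - z) v :=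
          hψd.hasLineDerivAt v
        have h2 : HasDerivAt (fun t : ℝ => ψ (x₀ - z + t • v)) (fderiv ℝ ψ (x₀ - z) v) 0 := hψl
        have h3 : (fun t : ℝ => G (z + t • (-v))) = (fun t : ℝ => ψ (x₀ - z + t • v)) := by
          funext t
          simp only [hGdef]
          congr 1
          module
        have hGl : HasLineDerivAt ℝ G (fderiv ℝ ψ (x₀ - z) v) z (-v) := by
          show HasDerivAt (fun t : ℝ => G (z + t • (-v))) (fderiv ℝ ψ (x₀ - z) v) 0
          rw [h3]; exact h2
        exact hGl.lineDeriv
      have IBP := hF.integral_lineDeriv_mul_eq (μ := volume) GLip Gcs v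
      have LHS0 : ∫ z, lineDeriv ℝ F z v * G z = 0 := by
        apply integral_eq_zero_of_ae
        filter_upwards [hae] with z hz
        by_cases hGz : G z = 0
        · simp [hGz]
        · have hsupp : x₀ - z ∈ support ψ := hGz
          rw [hψdef, φ.support_normed_eq] at hsupp
          have hdist : ‖x₀ - z‖ < δ := by simpa [hφdef] using mem_ball_zero_iff.1 hsupp
          have hzball : z ∈ ball x r := by
            rw [mem_ball]
            calc dist z x ≤ dist z x₀ + dist x₀ x := dist_triangle _ _ _
              _ < δ + (r - δ) := by
                  apply add_lt_add
                  · rw [dist_eq_norm, ← norm_neg]; simpa [neg_sub] using hdist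
                  · exact mem_ball.1 hx₀
              _ = r := by ring
          have : lineDeriv ℝ F z v = 0 := by
            rw [hz.1.lineDeriv_eq_fderiv, hz.2 hzball]
            simp
          simp [this]
      have e1 : ∀ t : E, (ContinuousLinearMap.lsmul ℝ ℝ) (F t) (fderiv ℝ ψ (x₀ - t) v)
          = lineDeriv ℝ G t (-v) * F t := by
        intro t
        rw [hline t]
        simp [mul_comm]
      calc (F ⋆[ContinuousLinearMap.lsmul ℝ ℝ, volume] fun a => fderiv ℝ ψ a v) x₀
          = ∫ t, (ContinuousLinearMap.lsmul ℝ ℝ) (F t) (fderiv ℝ ψ (x₀ - t) v) := by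
            rw [convolution_def]
        _ = ∫ t, lineDeriv ℝ G t (-v) * F t := by simp_rw [e1]
        _ = ∫ z, lineDeriv ℝ F z v * G z := IBP.symm
        _ = 0 := LHS0
    rw [← hzero]
    exact HD
  -- Step 2: the smoothed function is constant on the ball
  have hconst : (F ⋆[ContinuousLinearMap.lsmul ℝ ℝ, volume] ψ) y
      = (F ⋆[ContinuousLinearMap.lsmul ℝ ℝ, volume] ψ) x := by
    apply (convex_ball x (r - δ)).is_const_of_fderivWithin_eq_zero
      (fun z hz => ((key z hz).differentiableAt).differentiableWithinAt)
      (fun z hz => ?_) hyb hxb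
    rw [fderivWithin_of_isOpen isOpen_ball hz, (key z hz).fderiv]
  -- Step 3: the smoothed function is uniformly close to F
  have est : ∀ z : E, |(F ⋆[ContinuousLinearMap.lsmul ℝ ℝ, volume] ψ) z - F z| ≤ K * δ := by
    intro z
    have h1 : (F ⋆[ContinuousLinearMap.lsmul ℝ ℝ, volume] ψ) z = ∫ s, F (z - s) * ψ s := by
      rw [convolution_def]
      simp only [ContinuousLinearMap.lsmul_apply, smul_eq_mul]
      calc ∫ t, F t * ψ (z - t) = ∫ s, F (z - s) * ψ (z - (z - s)) :=
            (integral_sub_left_eq_self (fun t => F t * ψ (z - t)) volume z).symm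
        _ = ∫ s, F (z - s) * ψ s := by simp
    have h2 : F z = ∫ s, F z * ψ s := by
      rw [integral_const_mul, φ.integral_normed, mul_one]
    have i1 : Integrable (fun s => F (z - s) * ψ s) volume := by
      apply Continuous.integrable_of_hasCompactSupport
      · exact (hFc.comp (continuous_const.sub continuous_id)).mul φ.continuous_normed
      · exact hψc.mul_left
    have i2 : Integrable (fun s => F z * ψ s) volume := φ.integrable_normed.const_mul (F z)
    have i3 : Integrable (fun s => (F (z - s) - F z) * ψ s) volume := by
      have := i1.sub i2
      simpa [sub_mul, Pi.sub_def] using this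
    rw [h1]
    nth_rewrite 1 [h2]
    rw [← integral_sub i1 i2]
    have e2 : ∀ s : E, F (z - s) * ψ s - F z * ψ s = (F (z - s) - F z) * ψ s := fun s => by ring
    simp_rw [e2]
    have bound : ∀ s : E, |(F (z - s) - F z) * ψ s| ≤ (K * δ) * ψ s := by
      intro s
      by_cases hs : ψ s = 0
      · simp [hs]
      · have hsupp : s ∈ support ψ := hs
        rw [hψdef, φ.support_normed_eq] at hsupp
        have hns : ‖s‖ < δ := by simpa [hφdef] using mem_ball_zero_iff.1 hsupp
        rw [abs_mul, abs_of_nonneg (φ.nonneg_normed s)]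
        apply mul_le_mul_of_nonneg_right _ (φ.nonneg_normed s)
        have := hF.dist_le_mul (z - s) z
        rw [Real.dist_eq] at this
        calc |F (z - s) - F z| ≤ K * dist (z - s) z := this
          _ = K * ‖s‖ := by rw [dist_eq_norm]; congr 1; simp
          _ ≤ K * δ := by nlinarith
    calc |∫ s, (F (z - s) - F z) * ψ s| ≤ ∫ s, |(F (z - s) - F z) * ψ s| := by
          have hni := norm_integral_le_integral_norm (μ := volume) (fun s => (F (z - s) - F z) * ψ s)
          simpa only [Real.norm_eq_abs] using hni
      _ ≤ ∫ s, (K * δ) * ψ s := by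
          apply integral_mono i3.abs (φ.integrable_normed.const_mul _) bound
      _ = K * δ := by rw [integral_const_mul, φ.integral_normed, mul_one]
  have h5 : δ * (2 * K + 1) ≤ ε := by
    rw [← le_div_iff₀ (by positivity)]
    exact hδε
  calc |F y - F x|
      = |(F y - (F ⋆[ContinuousLinearMap.lsmul ℝ ℝ, volume] ψ) y)
        + ((F ⋆[ContinuousLinearMap.lsmul ℝ ℝ, volume] ψ) x - F x)| := by
        rw [← hconst]; ring_nf
    _ ≤ |F y - (F ⋆[ContinuousLinearMap.lsmul ℝ ℝ, volume] ψ) y|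
        + |(F ⋆[ContinuousLinearMap.lsmul ℝ ℝ, volume] ψ) x - F x| := abs_add_le _ _
    _ ≤ K * δ + K * δ := by
        refine add_le_add ?_ (est x)
        rw [abs_sub_comm]; exact est y
    _ ≤ ε := by linarith

end Aux


section Main
open MeasureTheory Metric Function Set
open scoped Convolution NNReal

/-- If `f : ℝⁿ → ℝ` is locally Lipschitz, then `∇̂f` has nonempty values, is locally bounded
(its values lie in the closed unit ball), and its graph is closed. -/
theorem stmt2 {n : ℕ} (f : EuclideanSpace ℝ (Fin n) → ℝ) (hf : LocallyLipschitz f) :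
    (∀ x, (hGrad f x).Nonempty) ∧
    (∀ x, hGrad f x ⊆ Metric.closedBall 0 1) ∧
    IsClosed {p : EuclideanSpace ℝ (Fin n) × EuclideanSpace ℝ (Fin n) | p.2 ∈ hGrad f p.1} := by
  have gradfd : ∀ (y : EuclideanSpace ℝ (Fin n)), gradient f y = 0 → fderiv ℝ f y = 0 := by
    intro y h
    have h2 : fderiv ℝ f y
        = (InnerProductSpace.toDual ℝ (EuclideanSpace ℝ (Fin n))) (gradient f y) :=
      ((InnerProductSpace.toDual ℝ (EuclideanSpace ℝ (Fin n))).apply_symm_apply _).symm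
    rw [h2, h, map_zero]
  refine ⟨?_, ?_, ?_⟩
  · -- nonemptiness
    intro x
    by_cases hc : ∀ᶠ y in 𝓝 x, f y = f x
    · exact ⟨0, fun _ => x, fun _ => 0, fun _ => Or.inr ⟨hc, rfl⟩,
        tendsto_const_nhds, tendsto_const_nhds⟩
    · have hex : ∀ k : ℕ, ∃ y : EuclideanSpace ℝ (Fin n),
          dist y x < 1 / (k + 1) ∧ DifferentiableAt ℝ f y ∧ gradient f y ≠ 0 := by
        intro k
        by_contra hcon
        push_neg at hcon
        obtain ⟨K, t, ht, hK⟩ := hf x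
        obtain ⟨r₀, hr₀, hball⟩ := Metric.mem_nhds_iff.1 ht
        set r := min r₀ (1 / (k + 1) : ℝ) with hrdef
        have hrpos : 0 < r := lt_min hr₀ (by positivity)
        have h1 : LipschitzOnWith K f (Metric.ball x r) :=
          hK.mono (Subset.trans (ball_subset_ball (min_le_left _ _)) hball)
        have h2 : ∀ y ∈ Metric.ball x r, DifferentiableAt ℝ f y → fderiv ℝ f y = 0 := by
          intro y hy hd
          have hlt : dist y x < 1 / (k + 1) := lt_of_lt_of_le (mem_ball.1 hy) (min_le_right _ _)
          exact gradfd y (hcon y hlt hd)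
        exact hc (eventually_of_mem (ball_mem_nhds x hrpos) (aux_const h1 h2))
      choose ys hys hdiff hgrad using hex
      set vs : ℕ → EuclideanSpace ℝ (Fin n) :=
        fun k => ‖gradient f (ys k)‖⁻¹ • gradient f (ys k) with hvs
      have hvsph : ∀ k, vs k ∈ Metric.sphere (0 : EuclideanSpace ℝ (Fin n)) 1 := by
        intro k
        rw [mem_sphere_zero_iff_norm]
        rw [hvs]
        simp only [norm_smul, norm_inv, norm_norm]
        exact inv_mul_cancel₀ (norm_ne_zero_iff.2 (hgrad k))
      obtain ⟨v, hvmem, φi, hφmono, hφtend⟩ :=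
        (isCompact_sphere (0 : EuclideanSpace ℝ (Fin n)) 1).tendsto_subseq hvsph
      refine ⟨v, fun k => ys (φi k), fun k => vs (φi k),
        fun k => Or.inl ⟨hdiff _, hgrad _, rfl⟩, ?_, hφtend⟩
      rw [tendsto_iff_dist_tendsto_zero]
      apply squeeze_zero (fun k => dist_nonneg) (g := fun k : ℕ => 1 / (k + 1 : ℝ))
        (fun k => ?_) tendsto_one_div_add_atTop_nhds_zero_nat
      calc dist (ys (φi k)) x ≤ 1 / (φi k + 1) := (hys (φi k)).le
        _ ≤ 1 / (k + 1) := by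
            apply one_div_le_one_div_of_le (by positivity)
            have hk : k ≤ φi k := hφmono.le_apply
            have : (k : ℝ) ≤ (φi k : ℝ) := Nat.cast_le.2 hk
            linarith
  · -- boundedness
    intro x v hv
    obtain ⟨xs, vs, hmem, hxs, hvs⟩ := hv
    have hb : ∀ k, vs k ∈ Metric.closedBall (0 : EuclideanSpace ℝ (Fin n)) 1 := by
      intro k
      rcases hmem k with ⟨hd, hg, hveq⟩ | ⟨-, hveq⟩
      · rw [mem_closedBall_zero_iff, hveq]
        simp only [norm_smul, norm_inv, norm_norm]
        rw [inv_mul_cancel₀ (norm_ne_zero_iff.2 hg)]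
      · simp [hveq]
    exact Metric.isClosed_closedBall.mem_of_tendsto hvs (Eventually.of_forall hb)
  · -- closed graph
    have hset : {p : EuclideanSpace ℝ (Fin n) × EuclideanSpace ℝ (Fin n) | p.2 ∈ hGrad f p.1}
        = closure {p : EuclideanSpace ℝ (Fin n) × EuclideanSpace ℝ (Fin n) | p.2 ∈ tGrad f p.1} := by
      ext p
      constructor
      · rintro ⟨xs, vs, hmem, hxs, hvs⟩
        have ht : Tendsto (fun k => (xs k, vs k)) atTop (𝓝 p) := by
          rw [show p = (p.1, p.2) from rfl]
          exact hxs.prodMk_nhds hvs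
        exact mem_closure_of_tendsto ht (Eventually.of_forall hmem)
      · intro hp
        obtain ⟨u, hu, hut⟩ := mem_closure_iff_seq_limit.1 hp
        exact ⟨fun k => (u k).1, fun k => (u k).2, fun k => hu k,
          (continuous_fst.tendsto p).comp hut, (continuous_snd.tendsto p).comp hut⟩
    rw [hset]
    exact isClosed_closure
end Main
end

section
/- Let f : ℝⁿ → ℝ be Lipschitz continuous with constant L > 0 on a neighborhood of x ∈ ℝⁿ, and let v be the Euclidean projection of 0 onto the nonempty compact convex set ∂̄f(x) = co ∇̄f(x). Then ⟨u, v⟩ ≥ |v|²/L for every u ∈ co ∇̂f(x), where co denotes the convex hull. -/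
open Filter Topology
open scoped RealInnerProductSpace ENNReal

private lemma inner_ge_of_min {E : Type*} [NormedAddCommGroup E] [InnerProductSpace ℝ E]
    {K : Set E} (hK : Convex ℝ K) {v : E} (hv : v ∈ K)
    (hmin : ∀ w ∈ K, ‖v‖ ≤ ‖w‖) {g : E} (hg : g ∈ K) :
    ‖v‖ ^ 2 ≤ ⟪g, v⟫ := by
  have key : ∀ t : ℝ, 0 < t → t ≤ 1 → 0 ≤ 2 * ⟪v, g - v⟫ + t * ‖g - v‖ ^ 2 := by
    intro t ht0 ht1
    have hw : v + t • (g - v) ∈ K := by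
      have := hK hv hg (by linarith : (0:ℝ) ≤ 1 - t) ht0.le (by ring)
      convert this using 1
      module
    have h1 : ‖v‖ ≤ ‖v + t • (g - v)‖ := hmin _ hw
    have h2 : ‖v + t • (g - v)‖ ^ 2 = ‖v‖ ^ 2 + 2 * ⟪v, t • (g - v)⟫ + ‖t • (g - v)‖ ^ 2 :=
      norm_add_sq_real _ _
    have h3 : ⟪v, t • (g - v)⟫ = t * ⟪v, g - v⟫ := real_inner_smul_right _ _ _
    have h4 : ‖t • (g - v)‖ = t * ‖g - v‖ := by
      rw [norm_smul, Real.norm_eq_abs, abs_of_pos ht0]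
    have h5 : ‖v‖ ^ 2 ≤ ‖v + t • (g - v)‖ ^ 2 :=
      pow_le_pow_left₀ (norm_nonneg _) h1 2
    have h4' : ‖t • (g - v)‖ ^ 2 = t ^ 2 * ‖g - v‖ ^ 2 := by rw [h4]; ring
    have h6 : 0 ≤ t * (2 * ⟪v, g - v⟫ + t * ‖g - v‖ ^ 2) := by nlinarith
    exact (mul_nonneg_iff_of_pos_left ht0).mp h6
  rcases eq_or_ne g v with rfl | hgv
  · rw [real_inner_self_eq_norm_sq]
  · have hb : 0 < ‖g - v‖ ^ 2 :=
      pow_pos (norm_pos_iff.mpr (sub_ne_zero.mpr hgv)) 2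
    have hA : 0 ≤ 2 * ⟪v, g - v⟫ := by
      by_contra hc
      push_neg at hc
      set A := 2 * ⟪v, g - v⟫ with hAdef
      set t := min 1 (-A / (2 * ‖g - v‖ ^ 2)) with htdef
      have ht0 : 0 < t := lt_min one_pos (div_pos (by linarith) (by linarith))
      have ht1 : t ≤ 1 := min_le_left _ _
      have hkey := key t ht0 ht1
      have htb : t * ‖g - v‖ ^ 2 ≤ -A / 2 := by
        calc t * ‖g - v‖ ^ 2 ≤ (-A / (2 * ‖g - v‖ ^ 2)) * ‖g - v‖ ^ 2 :=
              mul_le_mul_of_nonneg_right (min_le_right _ _) hb.le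
          _ = -A / 2 := by rw [div_mul_eq_mul_div, div_eq_div_iff (ne_of_gt (by linarith)) (by norm_num)]; ring
      linarith
    have h6 : 0 ≤ ⟪v, g⟫ - ⟪v, v⟫ := by
      have := inner_sub_right (𝕜 := ℝ) v g v
      linarith
    rw [real_inner_comm]
    have h7 : ⟪v, v⟫ = ‖v‖ ^ 2 := real_inner_self_eq_norm_sq v
    linarith

private lemma norm_gradient_eq {n : ℕ} (f : EuclideanSpace ℝ (Fin n) → ℝ)
    (y : EuclideanSpace ℝ (Fin n)) : ‖gradient f y‖ = ‖fderiv ℝ f y‖ :=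
  (InnerProductSpace.toDual ℝ _).symm.norm_map _

/-- If `f` is Lipschitz with constant `L > 0` near `x` and `v` is the Euclidean projection of `0`
onto the Clarke subdifferential `co ∇̄f(x)` (i.e. the minimal-norm element), then
`⟨u, v⟩ ≥ ‖v‖²/L` for every `u` in the convex hull of `∇̂f(x)`. -/
theorem stmt3 {n : ℕ} (f : EuclideanSpace ℝ (Fin n) → ℝ) (x : EuclideanSpace ℝ (Fin n))
    (L : NNReal) (hL : 0 < L) (s : Set (EuclideanSpace ℝ (Fin n))) (hs : s ∈ 𝓝 x)
    (hf : LipschitzOnWith L f s)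
    (v : EuclideanSpace ℝ (Fin n)) (hv : v ∈ convexHull ℝ (bGrad f x))
    (hvmin : ∀ w ∈ convexHull ℝ (bGrad f x), ‖v‖ ≤ ‖w‖) :
    ∀ u ∈ convexHull ℝ (hGrad f x), ‖v‖ ^ 2 / (L : ℝ) ≤ ⟪u, v⟫ := by
  rcases eq_or_ne v 0 with rfl | hv0
  · intro u _
    simp [inner_zero_right]
  have hK : Convex ℝ (convexHull ℝ (bGrad f x)) := convex_convexHull _ _
  have hproj : ∀ g ∈ convexHull ℝ (bGrad f x), ‖v‖ ^ 2 ≤ ⟪g, v⟫ :=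
    fun g hg => inner_ge_of_min hK hv hvmin hg
  have hvpos : (0:ℝ) < ‖v‖ ^ 2 := pow_pos (norm_pos_iff.mpr hv0) 2
  have hLpos : (0:ℝ) < (L : ℝ) := hL
  -- the half-space is convex
  have hlin : IsLinearMap ℝ (fun w : EuclideanSpace ℝ (Fin n) => ⟪w, v⟫) :=
    ⟨fun a b => inner_add_left a b v, fun c a => real_inner_smul_left a v c⟩
  have hhalf : Convex ℝ {w : EuclideanSpace ℝ (Fin n) | ‖v‖ ^ 2 / (L : ℝ) ≤ ⟪w, v⟫} :=
    convex_halfSpace_ge hlin _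
  -- it suffices to show `hGrad f x` is contained in the half-space
  intro u hu
  refine convexHull_min ?_ hhalf hu
  rintro w ⟨xs, vs, hmem, hxs, hvs⟩
  by_cases hB : ∃ᶠ k in atTop, (∀ᶠ y in 𝓝 (xs k), f y = f (xs k)) ∧ vs k = 0
  · -- locally constant case happens infinitely often: then 0 ∈ bGrad f x, so v = 0, contradiction
    exfalso
    obtain ⟨φ, hφ, hφP⟩ := extraction_of_frequently_atTop hB
    have hzero : (0 : EuclideanSpace ℝ (Fin n)) ∈ bGrad f x := by
      refine ⟨xs ∘ φ, fun k => ?_, hxs.comp hφ.tendsto_atTop, ?_⟩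
      · exact (differentiableAt_const _).congr_of_eventuallyEq (hφP k).1
      · have hgz : ∀ k, gradient f ((xs ∘ φ) k) = 0 := by
          intro k
          have : f =ᶠ[𝓝 (xs (φ k))] fun _ => f (xs (φ k)) := (hφP k).1
          simp only [Function.comp_apply]
          rw [this.gradient_eq, gradient_fun_const]
        simp only [hgz]
        exact tendsto_const_nhds
    have := hproj 0 (subset_convexHull ℝ _ hzero)
    rw [inner_zero_left] at this
    linarith
  · -- eventually we are in the differentiable case with nonzero gradient
    rw [Filter.not_frequently] at hB
    have hA : ∀ᶠ k in atTop, DifferentiableAt ℝ f (xs k) ∧ gradient f (xs k) ≠ 0 ∧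
        vs k = ‖gradient f (xs k)‖⁻¹ • gradient f (xs k) := by
      filter_upwards [hB] with k hk
      rcases hmem k with h | h
      · exact h
      · exact absurd h hk
    have hmemS : ∀ᶠ k in atTop, xs k ∈ interior s :=
      hxs (interior_mem_nhds.mpr hs)
    obtain ⟨φ, hφ, hφP⟩ := extraction_of_frequently_atTop ((hA.and hmemS).frequently)
    set g : ℕ → EuclideanSpace ℝ (Fin n) := fun k => gradient f (xs (φ k)) with hg
    have hgb : ∀ k, g k ∈ Metric.closedBall (0 : EuclideanSpace ℝ (Fin n)) (L : ℝ) := by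
      intro k
      rw [Metric.mem_closedBall, dist_zero_right]
      have hnbhd : s ∈ 𝓝 (xs (φ k)) := mem_interior_iff_mem_nhds.mp (hφP k).2
      calc ‖g k‖ = ‖fderiv ℝ f (xs (φ k))‖ := norm_gradient_eq f _
        _ ≤ (L : ℝ) := norm_fderiv_le_of_lipschitzOn ℝ hnbhd hf
    obtain ⟨ginf, hginf_mem, ψ, hψ, hgψ⟩ :=
      tendsto_subseq_of_bounded Metric.isBounded_closedBall hgb
    have hginf_ball : ginf ∈ Metric.closedBall (0 : EuclideanSpace ℝ (Fin n)) (L : ℝ) := by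
      rwa [IsClosed.closure_eq Metric.isClosed_closedBall] at hginf_mem
    have hginf_norm : ‖ginf‖ ≤ (L : ℝ) := by
      rwa [Metric.mem_closedBall, dist_zero_right] at hginf_ball
    have hginf_bGrad : ginf ∈ bGrad f x := by
      refine ⟨xs ∘ φ ∘ ψ, fun k => (hφP (ψ k)).1.1, ?_, hgψ⟩
      exact hxs.comp ((hφ.comp hψ).tendsto_atTop)
    have hginf_inner : ‖v‖ ^ 2 ≤ ⟪ginf, v⟫ := hproj _ (subset_convexHull ℝ _ hginf_bGrad)
    have hginf_ne : ginf ≠ 0 := by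
      intro h
      rw [h, inner_zero_left] at hginf_inner
      linarith
    have hginf_npos : 0 < ‖ginf‖ := norm_pos_iff.mpr hginf_ne
    -- the normalized gradients converge to the normalization of ginf
    have hw_eq : w = ‖ginf‖⁻¹ • ginf := by
      have h1 : Tendsto (fun k => vs (φ (ψ k))) atTop (𝓝 w) :=
        hvs.comp ((hφ.comp hψ).tendsto_atTop)
      have h2 : Tendsto (fun k => ‖g (ψ k)‖⁻¹ • g (ψ k)) atTop (𝓝 (‖ginf‖⁻¹ • ginf)) := by
        have hn : Tendsto (fun k => ‖g (ψ k)‖⁻¹) atTop (𝓝 ‖ginf‖⁻¹) :=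
          ((continuous_norm.tendsto ginf).comp hgψ).inv₀ (ne_of_gt hginf_npos)
        exact hn.smul hgψ
      have h3 : (fun k => vs (φ (ψ k))) = fun k => ‖g (ψ k)‖⁻¹ • g (ψ k) := by
        funext k
        exact (hφP (ψ k)).1.2.2
      rw [h3] at h1
      exact tendsto_nhds_unique h1 h2
    -- conclude
    show ‖v‖ ^ 2 / (L : ℝ) ≤ ⟪w, v⟫
    rw [hw_eq, real_inner_smul_left]
    have hinv : (L : ℝ)⁻¹ ≤ ‖ginf‖⁻¹ := by
      exact inv_anti₀ hginf_npos hginf_norm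
    calc ‖v‖ ^ 2 / (L : ℝ) = (L : ℝ)⁻¹ * ‖v‖ ^ 2 := by ring
      _ ≤ ‖ginf‖⁻¹ * ‖v‖ ^ 2 := mul_le_mul_of_nonneg_right hinv hvpos.le
      _ ≤ ‖ginf‖⁻¹ * ⟪ginf, v⟫ := mul_le_mul_of_nonneg_left hginf_inner (by positivity)
end

section
/- (Fermat's rule for the normalized subdifferential.) Let f : ℝⁿ → ℝ be locally Lipschitz. If x̄ ∈ ℝⁿ is a local minimum or a local maximum of f, then 0 ∈ co ∇̂f(x̄). -/
open Filter Topology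
open scoped RealInnerProductSpace ENNReal
open Set Metric MeasureTheory Pointwise
open scoped NNReal

section Aux

variable {n : ℕ} {f g : EuclideanSpace ℝ (Fin n) → ℝ} {x v : EuclideanSpace ℝ (Fin n)}

lemma norm_le_one_of_mem_tGrad (hv : v ∈ tGrad f x) : ‖v‖ ≤ 1 := by
  rcases hv with ⟨_, hne, rfl⟩ | ⟨_, rfl⟩
  · rw [norm_smul, norm_inv, norm_norm, inv_mul_cancel₀ (norm_ne_zero_iff.2 hne)]
  · simp

lemma zero_mem_hGrad_of_locallyConstant (h : ∀ᶠ y in 𝓝 x, f y = f x) : 0 ∈ hGrad f x :=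
  ⟨fun _ => x, fun _ => 0, fun _ => Or.inr ⟨h, rfl⟩, tendsto_const_nhds, tendsto_const_nhds⟩

lemma hGrad_eq_closure :
    hGrad f x = {v | (x, v) ∈ closure {p : EuclideanSpace ℝ (Fin n) × EuclideanSpace ℝ (Fin n) |
      p.2 ∈ tGrad f p.1}} := by
  ext v
  constructor
  · rintro ⟨xs, vs, hm, hx, hv⟩
    exact mem_closure_of_tendsto (hx.prodMk_nhds hv) (Filter.Eventually.of_forall hm)
  · intro hv
    obtain ⟨u, hu, hlim⟩ := mem_closure_iff_seq_limit.1 hv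
    exact ⟨fun k => (u k).1, fun k => (u k).2, hu,
      (continuous_fst.tendsto _).comp hlim, (continuous_snd.tendsto _).comp hlim⟩

lemma isClosed_hGrad : IsClosed (hGrad f x) := by
  rw [hGrad_eq_closure]
  exact isClosed_closure.preimage (Continuous.prodMk_right x)

lemma hGrad_subset_closedBall : hGrad f x ⊆ Metric.closedBall 0 1 := by
  rintro v ⟨xs, vs, hm, _, hv⟩
  rw [Metric.mem_closedBall, dist_zero_right]
  exact le_of_tendsto hv.norm (Filter.Eventually.of_forall fun k =>
    norm_le_one_of_mem_tGrad (hm k))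

lemma tGrad_congr (h : f =ᶠ[𝓝 x] g) : tGrad f x = tGrad g x := by
  have hx' : f x = g x := h.eq_of_nhds
  have h1 : gradient f x = gradient g x := h.gradient_eq
  have h2 : DifferentiableAt ℝ f x ↔ DifferentiableAt ℝ g x :=
    h.differentiableAt_iff
  have h3 : (∀ᶠ y in 𝓝 x, f y = f x) ↔ (∀ᶠ y in 𝓝 x, g y = g x) := by
    constructor <;> intro H <;> filter_upwards [h, H] with y hy hy2
    · rw [← hy, hy2, hx']
    · rw [hy, hy2, hx']
  ext v
  simp only [tGrad, mem_setOf_eq, h1, h2, h3]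

lemma caratheodory_rep {S : Set (EuclideanSpace ℝ (Fin n))} (hS : S.Nonempty)
    (hx : x ∈ convexHull ℝ S) :
    ∃ (w : Fin (n + 1) → ℝ) (z : Fin (n + 1) → EuclideanSpace ℝ (Fin n)),
      (∀ i, 0 ≤ w i) ∧ (∑ i, w i) = 1 ∧ (∀ i, z i ∈ S) ∧ (∑ i, w i • z i) = x := by
  classical
  obtain ⟨s₀, hs₀⟩ := hS
  obtain ⟨ι, hι, z, w, hzS, hai, hwpos, hw1, hwz⟩ := eq_pos_convex_span_of_mem_convexHull hx
  have hcard : Fintype.card ι ≤ Fintype.card (Fin (n + 1)) := by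
    have h := hai.card_le_finrank_succ
    have h2 : Module.finrank ℝ ↥(vectorSpan ℝ (range z)) ≤ n := by
      have := Submodule.finrank_le (vectorSpan ℝ (range z))
      rwa [finrank_euclideanSpace_fin] at this
    simp only [Fintype.card_fin]
    omega
  obtain ⟨em⟩ := Function.Embedding.nonempty_of_card_le hcard
  have hsum : ∀ {M : Type} [AddCommMonoid M] (F : Fin (n + 1) → M),
      (∀ j, (¬∃ a, em a = j) → F j = 0) → (∑ j, F j) = ∑ i, F (em i) := by
    intro M _ F hF
    rw [← Finset.sum_map Finset.univ em F]
    refine (Finset.sum_subset (Finset.subset_univ _) ?_).symm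
    intro j _ hj
    refine hF j fun ⟨a, ha⟩ => hj ?_
    rw [Finset.mem_map]
    exact ⟨a, Finset.mem_univ a, ha⟩
  refine ⟨Function.extend em w 0, Function.extend em z (fun _ => s₀), ?_, ?_, ?_, ?_⟩
  · intro j
    by_cases hmem : ∃ a, em a = j
    · obtain ⟨a, rfl⟩ := hmem
      rw [em.injective.extend_apply]
      exact (hwpos a).le
    · rw [Function.extend_apply' _ _ _ hmem]
      rfl
  · have h1 := hsum (Function.extend (⇑em) w 0)
      (fun j hj => Function.extend_apply' w (0 : Fin (n + 1) → ℝ) j hj)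
    rw [h1]
    simp only [em.injective.extend_apply]
    exact hw1
  · intro j
    by_cases hmem : ∃ a, em a = j
    · obtain ⟨a, rfl⟩ := hmem
      rw [em.injective.extend_apply]
      exact hzS ⟨a, rfl⟩
    · rw [Function.extend_apply' _ _ _ hmem]
      exact hs₀
  · have h1 := hsum (fun j => Function.extend (⇑em) w 0 j • Function.extend (⇑em) z (fun _ => s₀) j)
      (fun j hj => by
        show Function.extend (⇑em) w 0 j • Function.extend (⇑em) z (fun _ => s₀) j = 0
        rw [Function.extend_apply' w (0 : Fin (n + 1) → ℝ) j hj]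
        exact zero_smul ℝ _)
    rw [h1]
    simp only [em.injective.extend_apply]
    exact hwz

lemma isCompact_convexHull_fd {S : Set (EuclideanSpace ℝ (Fin n))} (hS : IsCompact S) :
    IsCompact (convexHull ℝ S) := by
  rcases eq_empty_or_nonempty S with rfl | hne
  · rw [convexHull_empty]
    exact isCompact_empty
  · have hK : IsCompact ((stdSimplex ℝ (Fin (n + 1))) ×ˢ
        (Set.univ.pi fun _ : Fin (n + 1) => S)) :=
      (isCompact_stdSimplex ℝ _).prod (isCompact_univ_pi fun _ => hS)
    have hcont : Continuous fun p :
        (Fin (n + 1) → ℝ) × (Fin (n + 1) → EuclideanSpace ℝ (Fin n)) =>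
        ∑ i, p.1 i • p.2 i :=
      continuous_finset_sum _ fun i _ =>
        ((continuous_apply i).comp continuous_fst).smul
          ((continuous_apply i).comp continuous_snd)
    have himg : (fun p : (Fin (n + 1) → ℝ) × (Fin (n + 1) → EuclideanSpace ℝ (Fin n)) =>
        ∑ i, p.1 i • p.2 i) '' ((stdSimplex ℝ (Fin (n + 1))) ×ˢ
        (Set.univ.pi fun _ : Fin (n + 1) => S)) = convexHull ℝ S := by
      apply Subset.antisymm
      · rintro _ ⟨⟨w, z⟩, ⟨hw, hz⟩, rfl⟩
        exact (convex_convexHull ℝ S).sum_mem (fun i _ => hw.1 i) hw.2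
          (fun i _ => subset_convexHull ℝ S (hz i (mem_univ i)))
      · intro x hx
        obtain ⟨w, z, hw0, hw1, hzS, hsum⟩ := caratheodory_rep hne hx
        exact ⟨(w, z), ⟨⟨hw0, hw1⟩, fun i _ => hzS i⟩, hsum⟩
    rw [← himg]
    exact hK.image hcont

lemma lip1D {h : ℝ → ℝ} {K : ℝ≥0} (hh : LipschitzWith K h) {a b : ℝ} (hab : a ≤ b)
    {E : Set ℝ} (hE : volume E = 0)
    (hd : ∀ t ∈ Icc a b, t ∉ E → ∃ h' : ℝ, 0 ≤ h' ∧ HasDerivAt h h' t) : h a ≤ h b := by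
  rcases eq_or_lt_of_le hab with rfl | hab'
  · exact le_refl _
  refine le_of_forall_pos_le_add fun ε hε => ?_
  set c : ℝ := 2 * (K : ℝ) + 1 with hc
  have hcpos : (0:ℝ) < c := by positivity
  set η : ℝ := ε / (2 * (b - a)) with hη
  have hba : (0:ℝ) < b - a := sub_pos.2 hab'
  have hηpos : 0 < η := by positivity
  obtain ⟨U, hEU, hUopen, hUvol⟩ := Set.exists_isOpen_lt_of_lt E
    (ENNReal.ofReal (ε / (2 * c))) (by rw [hE]; exact ENNReal.ofReal_pos.2 (by positivity))
  have hUfin : volume U ≠ ⊤ := (hUvol.trans ENNReal.ofReal_lt_top).ne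
  set m : ℝ → ℝ := fun t => (volume (U ∩ Ioc a t)).toReal with hm
  have hfin : ∀ s t : ℝ, volume (U ∩ Ioc s t) ≠ ⊤ := fun s t =>
    ((measure_mono inter_subset_left).trans_lt (hUvol.trans ENNReal.ofReal_lt_top)).ne
  have hm_mono : ∀ {s t : ℝ}, s ≤ t → m s ≤ m t := by
    intro s t hst
    exact (ENNReal.toReal_le_toReal (hfin a s) (hfin a t)).2
      (measure_mono (inter_subset_inter_right _ (Ioc_subset_Ioc_right hst)))
  have hm_add : ∀ {s t : ℝ}, a ≤ s → s ≤ t → m t - m s = (volume (U ∩ Ioc s t)).toReal := by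
    intro s t has hst
    have hdecomp : U ∩ Ioc a t = (U ∩ Ioc a s) ∪ (U ∩ Ioc s t) := by
      rw [← inter_union_distrib_left, Ioc_union_Ioc_eq_Ioc has hst]
    have hdisj : Disjoint (U ∩ Ioc a s) (U ∩ Ioc s t) :=
      (Ioc_disjoint_Ioc_of_le le_rfl).mono inter_subset_right inter_subset_right
    have hmeas : volume (U ∩ Ioc a t) = volume (U ∩ Ioc a s) + volume (U ∩ Ioc s t) := by
      rw [hdecomp, measure_union hdisj (hUopen.measurableSet.inter measurableSet_Ioc)]
    simp only [hm]
    rw [hmeas, ENNReal.toReal_add (hfin a s) (hfin s t)]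
    ring
  have hIoc_vol : ∀ {s t : ℝ}, s ≤ t → (volume (U ∩ Ioc s t)).toReal ≤ t - s := by
    intro s t hst
    calc (volume (U ∩ Ioc s t)).toReal ≤ (volume (Ioc s t)).toReal :=
          (ENNReal.toReal_le_toReal (hfin s t) (by rw [Real.volume_Ioc]; exact ENNReal.ofReal_ne_top)).2
            (measure_mono inter_subset_right)
      _ = t - s := by rw [Real.volume_Ioc, ENNReal.toReal_ofReal (sub_nonneg.2 hst)]
  have hm_cont : ContinuousOn m (Icc a b) := by
    refine LipschitzOnWith.continuousOn (K := 1) (lipschitzOnWith_iff_dist_le_mul.2 ?_)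
    intro s hs t ht
    rw [Real.dist_eq, Real.dist_eq, NNReal.coe_one, one_mul]
    rcases le_total t s with hts | hst
    · rw [abs_of_nonneg (sub_nonneg.2 (hm_mono hts)), abs_of_nonneg (sub_nonneg.2 hts)]
      rw [hm_add ht.1 hts]
      exact hIoc_vol hts
    · rw [abs_of_nonpos (sub_nonpos.2 (hm_mono hst)), abs_of_nonpos (sub_nonpos.2 hst),
        neg_sub, neg_sub, hm_add hs.1 hst]
      exact hIoc_vol hst
  set F : ℝ → ℝ := fun t => -(h t) - c * m t with hF
  have hFcont : ContinuousOn F (Icc a b) :=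
    (hh.continuous.neg.continuousOn).sub (continuousOn_const.mul hm_cont)
  set B : ℝ → ℝ := fun t => F a + η * (t - a) with hB
  have hBder : ∀ x ∈ Ico a b, HasDerivWithinAt B η (Ici x) x := by
    intro x _
    have h1 : HasDerivAt (fun t : ℝ => η * (t - a)) η x := by
      simpa using ((hasDerivAt_id x).sub_const a).const_mul η
    exact (h1.const_add (F a)).hasDerivWithinAt
  have bound : ∀ x ∈ Ico a b, ∀ r, η < r → ∃ᶠ z in 𝓝[>] x, slope F x z < r := by
    intro x hx r hr
    have hrpos : 0 < r := hηpos.trans hr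
    refine Filter.Eventually.frequently ?_
    by_cases hxE : x ∈ E
    · have hU' : U ∈ 𝓝 x := hUopen.mem_nhds (hEU hxE)
      obtain ⟨ε', hε', hball⟩ := Metric.mem_nhds_iff.1 hU'
      have hIoo : Ioo x (x + ε') ∈ 𝓝[>] x :=
        Ioo_mem_nhdsGT_of_mem ⟨le_refl x, by linarith⟩
      filter_upwards [hIoo] with z hz
      have hzx : 0 < z - x := sub_pos.2 hz.1
      have hsub : Ioc x z ⊆ U := by
        intro t htt
        apply hball
        rw [Metric.mem_ball, Real.dist_eq, abs_of_pos (sub_pos.2 htt.1)]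
        linarith [htt.2, hz.2]
      have hmz : m z - m x = z - x := by
        rw [hm_add hx.1 hz.1.le, inter_eq_self_of_subset_right hsub, Real.volume_Ioc,
          ENNReal.toReal_ofReal hzx.le]
      have hhz : -(h z - h x) ≤ (K:ℝ) * (z - x) := by
        have := hh.dist_le_mul z x
        rw [Real.dist_eq, Real.dist_eq, abs_of_pos hzx] at this
        have h2 := neg_abs_le (h z - h x)
        have h3 := abs_sub_comm (h z) (h x) ▸ this
        nlinarith [abs_nonneg (h z - h x), neg_abs_le (h z - h x), this]
      rw [slope_def_field, div_lt_iff₀ hzx]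
      have hFz : F z - F x = -(h z - h x) - c * (m z - m x) := by simp only [hF]; ring
      have : F z - F x ≤ ((K:ℝ) - c) * (z - x) := by
        rw [hFz, hmz]; nlinarith
      have hKc : ((K:ℝ) - c) * (z - x) < r * (z - x) := by
        apply mul_lt_mul_of_pos_right _ hzx
        simp only [hc]; nlinarith [NNReal.coe_nonneg K]
      linarith
    · obtain ⟨h', h'0, hder⟩ := hd x (Ico_subset_Icc_self hx) hxE
      have hslope := hasDerivAt_iff_tendsto_slope.1 hder
      have h1 : ∀ᶠ z in 𝓝[≠] x, -r < slope h x z :=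
        hslope (Ioi_mem_nhds (by linarith))
      have h2 : ∀ᶠ z in 𝓝[>] x, -r < slope h x z :=
        nhdsWithin_mono x (fun z hz => ne_of_gt hz) h1
      filter_upwards [h2, self_mem_nhdsWithin] with z hz hzmem
      have hzx : 0 < z - x := sub_pos.2 hzmem
      rw [slope_def_field, div_lt_iff₀ hzx]
      rw [slope_def_field] at hz
      have h3 : -r * (z - x) < h z - h x := (lt_div_iff₀ hzx).1 hz
      have hmx : 0 ≤ m z - m x := sub_nonneg.2 (hm_mono hzmem.le)
      have hFz : F z - F x = -(h z - h x) - c * (m z - m x) := by simp only [hF]; ring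
      nlinarith [mul_nonneg hcpos.le hmx]
  have hconc := image_le_of_liminf_slope_right_le_deriv_boundary hFcont
    (by simp [hB] : F a ≤ B a)
    (continuousOn_const.add (continuousOn_const.mul ((continuousOn_id.sub continuousOn_const))))
    hBder bound (right_mem_Icc.2 hab)
  have hma : m a = 0 := by simp [hm]
  have hmb : m b ≤ ε / (2 * c) := by
    have h1 : volume (U ∩ Ioc a b) ≤ ENNReal.ofReal (ε / (2 * c)) :=
      le_of_lt ((measure_mono inter_subset_left).trans_lt hUvol)
    calc m b ≤ (ENNReal.ofReal (ε / (2 * c))).toReal :=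
          (ENNReal.toReal_le_toReal (hfin a b) ENNReal.ofReal_ne_top).2 h1
      _ = ε / (2 * c) := ENNReal.toReal_ofReal (by positivity)
  have hηb : η * (b - a) = ε / 2 := by
    rw [hη]; field_simp
  have hcm : c * m b ≤ ε / 2 := by
    have h1 : c * m b ≤ c * (ε / (2 * c)) := mul_le_mul_of_nonneg_left hmb hcpos.le
    have h2 : c * (ε / (2 * c)) = ε / 2 := by field_simp
    linarith
  have hFb : F b ≤ B b := hconc
  simp only [hF, hB, hma] at hFb
  nlinarith [hFb, hcm, hηb, hcpos, hm_mono (le_refl a)]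

lemma fubini_lines {N : Set (EuclideanSpace ℝ (Fin n))} (hN : MeasurableSet N)
    (h0 : volume N = 0) (e : EuclideanSpace ℝ (Fin n)) :
    ∀ᵐ x : EuclideanSpace ℝ (Fin n), ∀ᵐ s : ℝ, x + s • e ∉ N := by
  set P : Set (ℝ × EuclideanSpace ℝ (Fin n)) := {q | q.2 + q.1 • e ∈ N} with hP
  have hPmeas : MeasurableSet P := by
    have hcont : Continuous fun q : ℝ × EuclideanSpace ℝ (Fin n) => q.2 + q.1 • e :=
      continuous_snd.add (continuous_fst.smul continuous_const)
    exact hN.preimage hcont.measurable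
  have hP0 : ((volume : Measure ℝ).prod volume) P = 0 := by
    rw [Measure.prod_apply hPmeas]
    have hfib : ∀ s : ℝ, volume (Prod.mk s ⁻¹' P) = 0 := by
      intro s
      have h1 : (Prod.mk s ⁻¹' P) = (fun x => s • e + x) ⁻¹' N := by
        ext x
        simp [hP, add_comm]
      rw [h1, measure_preimage_add]
      exact h0
    simp [hfib]
  have hswap : ((volume : Measure (EuclideanSpace ℝ (Fin n))).prod volume)
      (Prod.swap ⁻¹' P) = 0 := by
    rw [Measure.measurePreserving_swap.measure_preimage hPmeas.nullMeasurableSet]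
    exact hP0
  have hae := measure_eq_zero_iff_ae_notMem.1 hswap
  have hae2 : ∀ᵐ q : EuclideanSpace ℝ (Fin n) × ℝ
      ∂((volume : Measure (EuclideanSpace ℝ (Fin n))).prod volume), q.1 + q.2 • e ∉ N := hae
  exact Measure.ae_ae_of_ae_prod hae2

lemma seg_mono {K : ℝ≥0} (hg : LipschitzWith K g) {N : Set (EuclideanSpace ℝ (Fin n))}
    (hN : volume N = 0) {ρ : ℝ} {xb e : EuclideanSpace ℝ (Fin n)}
    (hgood : ∀ y ∈ Metric.ball xb ρ, y ∉ N →
      DifferentiableAt ℝ g y ∧ 0 ≤ ⟪gradient g y, e⟫)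
    (x : EuclideanSpace ℝ (Fin n)) (t : ℝ) (ht : 0 ≤ t)
    (hseg : ∀ s ∈ Icc (0:ℝ) t, x + s • e ∈ Metric.ball xb ρ) :
    g x ≤ g (x + t • e) := by
  set N' := toMeasurable volume N with hN'
  have hN'meas : MeasurableSet N' := measurableSet_toMeasurable _ _
  have hN'0 : volume N' = 0 := by rw [measure_toMeasurable]; exact hN
  have hgood' : ∀ y ∈ Metric.ball xb ρ, y ∉ N' →
      DifferentiableAt ℝ g y ∧ 0 ≤ ⟪gradient g y, e⟫ :=
    fun y hy hyN => hgood y hy fun hyN2 => hyN (subset_toMeasurable _ _ hyN2)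
  have hae := fubini_lines hN'meas hN'0 e
  have hdense : Dense {x' : EuclideanSpace ℝ (Fin n) | ∀ᵐ s : ℝ, x' + s • e ∉ N'} :=
    Measure.dense_of_ae hae
  have key : ∀ x' : EuclideanSpace ℝ (Fin n), (∀ᵐ s : ℝ, x' + s • e ∉ N') →
      (∀ s ∈ Icc (0:ℝ) t, x' + s • e ∈ Metric.ball xb ρ) → g x' ≤ g (x' + t • e) := by
    intro x' hxae hseg'
    set h : ℝ → ℝ := fun s => g (x' + s • e) with hhdef
    have hline : LipschitzWith (K * ‖e‖₊) h := by
      refine LipschitzWith.of_dist_le_mul fun s s' => ?_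
      calc dist (h s) (h s') ≤ K * dist (x' + s • e) (x' + s' • e) := hg.dist_le_mul _ _
        _ = ↑(K * ‖e‖₊) * dist s s' := by
            rw [dist_add_left, dist_eq_norm, ← sub_smul, norm_smul, Real.norm_eq_abs,
              ← Real.dist_eq, NNReal.coe_mul, coe_nnnorm]
            ring
    set E₁ : Set ℝ := {s | x' + s • e ∈ N'} with hE₁
    have hE₁0 : volume E₁ = 0 := measure_eq_zero_iff_ae_notMem.2 hxae
    have hcalc : h 0 ≤ h t := by
      refine lip1D hline ht hE₁0 fun s hs hsE => ?_
      have hy : x' + s • e ∈ Metric.ball xb ρ := hseg' s hs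
      obtain ⟨hdiff, hinner⟩ := hgood' _ hy hsE
      refine ⟨fderiv ℝ g (x' + s • e) e, ?_, ?_⟩
      · have hgrad : gradient g (x' + s • e) =
            (InnerProductSpace.toDual ℝ _).symm (fderiv ℝ g (x' + s • e)) := rfl
        have h2 : ⟪gradient g (x' + s • e), e⟫ = fderiv ℝ g (x' + s • e) e := by
          rw [hgrad]
          exact InnerProductSpace.toDual_symm_apply
        rwa [h2] at hinner
      · have hline' : HasDerivAt (fun u : ℝ => x' + u • e) e s := by
          simpa using ((hasDerivAt_id s).smul_const e).const_add x'
        exact hdiff.hasFDerivAt.comp_hasDerivAt s hline'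
    simpa [hhdef] using hcalc
  set φ : ℝ → ℝ := fun s => dist (x + s • e) xb with hφ
  have hφc : ContinuousOn φ (Icc 0 t) :=
    ((continuous_const.add (continuous_id.smul continuous_const)).dist
      continuous_const).continuousOn
  have hne : (Icc (0:ℝ) t).Nonempty := nonempty_Icc.2 ht
  obtain ⟨s₀, hs₀mem, hs₀max⟩ := isCompact_Icc.exists_isMaxOn hne hφc
  have hM : φ s₀ < ρ := by
    have := hseg s₀ hs₀mem
    rwa [mem_ball] at this
  have hx_cl : x ∈ closure {x' : EuclideanSpace ℝ (Fin n) | ∀ᵐ s : ℝ, x' + s • e ∉ N'} := by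
    rw [hdense.closure_eq]; trivial
  obtain ⟨u, hu, hulim⟩ := mem_closure_iff_seq_limit.1 hx_cl
  have hev : ∀ᶠ j in atTop, u j ∈ Metric.ball x (ρ - φ s₀) :=
    hulim (Metric.ball_mem_nhds x (by linarith))
  have hgj : ∀ᶠ j in atTop, g (u j) ≤ g (u j + t • e) := by
    filter_upwards [hev] with j hj'
    have hj : dist (u j) x < ρ - φ s₀ := Metric.mem_ball.1 hj'
    refine key (u j) (hu j) fun s hs => ?_
    have h1 : dist (u j + s • e) (x + s • e) = dist (u j) x := by
      rw [dist_add_right]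
    have h2 : dist (x + s • e) xb ≤ φ s₀ := hs₀max hs
    calc dist (u j + s • e) xb ≤ dist (u j + s • e) (x + s • e) + dist (x + s • e) xb :=
          dist_triangle _ _ _
      _ < (ρ - φ s₀) + φ s₀ := by rw [h1]; linarith
      _ = ρ := by ring
  have hL1 : Tendsto (fun j => g (u j)) atTop (𝓝 (g x)) := (hg.continuous.tendsto x).comp hulim
  have hL2 : Tendsto (fun j => g (u j + t • e)) atTop (𝓝 (g (x + t • e))) :=
    (hg.continuous.tendsto _).comp (hulim.add tendsto_const_nhds)
  exact le_of_tendsto_of_tendsto hL1 hL2 hgj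

lemma main_lip [Nontrivial (EuclideanSpace ℝ (Fin n))] {K : ℝ≥0} (hg : LipschitzWith K g)
    {xb : EuclideanSpace ℝ (Fin n)} (hxb : IsLocalMin g xb ∨ IsLocalMax g xb) :
    (0 : EuclideanSpace ℝ (Fin n)) ∈ convexHull ℝ (hGrad g xb) := by
  by_contra h0
  set S := hGrad g xb with hS
  have hSc : IsCompact S :=
    (isCompact_closedBall (0 : EuclideanSpace ℝ (Fin n)) 1).of_isClosed_subset
      isClosed_hGrad hGrad_subset_closedBall
  have hhull : IsCompact (convexHull ℝ S) := isCompact_convexHull_fd hSc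
  obtain ⟨φ, u, hφ0, hφS⟩ :=
    geometric_hahn_banach_point_closed (convex_convexHull ℝ S) hhull.isClosed h0
  rw [map_zero] at hφ0
  set d := (InnerProductSpace.toDual ℝ (EuclideanSpace ℝ (Fin n))).symm φ with hd
  have hdip : ∀ v : EuclideanSpace ℝ (Fin n), ⟪d, v⟫ = φ v := fun v =>
    InnerProductSpace.toDual_symm_apply
  set δ := u / 2 with hδ
  have hδpos : 0 < δ := half_pos hφ0
  -- Step C : uniform cone condition near xb
  have hC : ∃ ρ > 0, ∀ y ∈ Metric.ball xb ρ, ∀ v ∈ tGrad g y, δ < ⟪d, v⟫ := by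
    by_contra hCn
    push_neg at hCn
    have hseq : ∀ k : ℕ, ∃ y, y ∈ Metric.ball xb (1 / ((k : ℝ) + 1)) ∧
        ∃ v, v ∈ tGrad g y ∧ ⟪d, v⟫ ≤ δ := by
      intro k
      obtain ⟨y, hy, v, hv, hvd⟩ := hCn (1 / ((k : ℝ) + 1)) (by positivity)
      exact ⟨y, hy, v, hv, hvd⟩
    choose y hy v hv hvd using hseq
    have hvball : ∀ k, v k ∈ Metric.closedBall (0 : EuclideanSpace ℝ (Fin n)) 1 := fun k => by
      rw [Metric.mem_closedBall, dist_zero_right]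
      exact norm_le_one_of_mem_tGrad (hv k)
    obtain ⟨w, _, σ, hσ, hwlim⟩ :=
      (isCompact_closedBall (0 : EuclideanSpace ℝ (Fin n)) 1).tendsto_subseq hvball
    have hylim : Tendsto (fun k => y (σ k)) atTop (𝓝 xb) := by
      have h1 : Tendsto (fun k : ℕ => 1 / ((k : ℝ) + 1)) atTop (𝓝 0) :=
        tendsto_one_div_add_atTop_nhds_zero_nat
      have h2 : Tendsto (fun k => dist (y k) xb) atTop (𝓝 0) :=
        squeeze_zero (fun k => dist_nonneg) (fun k => (Metric.mem_ball.1 (hy k)).le) h1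
      have h3 : Tendsto (fun k => dist (y (σ k)) xb) atTop (𝓝 0) :=
        h2.comp hσ.tendsto_atTop
      exact tendsto_iff_dist_tendsto_zero.2 h3
    have hwS : w ∈ S := ⟨fun k => y (σ k), fun k => v (σ k), fun k => hv (σ k), hylim, hwlim⟩
    have hut : u < φ w := hφS w (subset_convexHull ℝ S hwS)
    have hle : φ w ≤ δ := by
      have hφlim : Tendsto (fun k => φ (v (σ k))) atTop (𝓝 (φ w)) :=
        (φ.continuous.tendsto w).comp hwlim
      exact le_of_tendsto hφlim (Filter.Eventually.of_forall fun k => by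
        rw [← hdip]; exact hvd (σ k))
    rw [hδ] at hle
    linarith
  obtain ⟨ρ₀, hρ₀, hcone⟩ := hC
  obtain ⟨r₁, hr₁, hext⟩ : ∃ r₁ > 0,
      (∀ y ∈ Metric.ball xb r₁, g xb ≤ g y) ∨ (∀ y ∈ Metric.ball xb r₁, g y ≤ g xb) := by
    rcases hxb with hmin | hmax
    · obtain ⟨r₁, hr₁, hmin'⟩ := Metric.eventually_nhds_iff_ball.1 hmin
      exact ⟨r₁, hr₁, Or.inl hmin'⟩
    · obtain ⟨r₁, hr₁, hmax'⟩ := Metric.eventually_nhds_iff_ball.1 hmax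
      exact ⟨r₁, hr₁, Or.inr hmax'⟩
  set ρ := min ρ₀ r₁ with hρ
  have hρpos : 0 < ρ := lt_min hρ₀ hr₁
  have hrad : ∀ᵐ y : EuclideanSpace ℝ (Fin n), DifferentiableAt ℝ g y :=
    hg.ae_differentiableAt
  set N := {y : EuclideanSpace ℝ (Fin n) | ¬ DifferentiableAt ℝ g y} with hN
  have hN0 : volume N = 0 := ae_iff.1 hrad
  have hgoodall : ∀ e : EuclideanSpace ℝ (Fin n), dist e d < δ →
      ∀ y ∈ Metric.ball xb ρ, y ∉ N → DifferentiableAt ℝ g y ∧ 0 ≤ ⟪gradient g y, e⟫ := by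
    intro e he y hy hyN
    have hdiff : DifferentiableAt ℝ g y := not_not.1 hyN
    refine ⟨hdiff, ?_⟩
    by_cases hgr : gradient g y = 0
    · rw [hgr, inner_zero_left]
    · have hmem : ‖gradient g y‖⁻¹ • gradient g y ∈ tGrad g y := Or.inl ⟨hdiff, hgr, rfl⟩
      have h1 : δ < ⟪d, ‖gradient g y‖⁻¹ • gradient g y⟫ :=
        hcone y (Metric.ball_subset_ball (min_le_left _ _) hy) _ hmem
      have hnorm : 0 < ‖gradient g y‖ := norm_pos_iff.2 hgr
      rw [real_inner_smul_right, inv_mul_eq_div] at h1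
      have h2 : δ * ‖gradient g y‖ < ⟪d, gradient g y⟫ := by
        have := (lt_div_iff₀ hnorm).1 h1
        linarith
      have h4 : ⟪gradient g y, e⟫ = ⟪gradient g y, d⟫ + ⟪gradient g y, e - d⟫ := by
        rw [← inner_add_right]
        norm_num
      have h5 : ⟪gradient g y, d⟫ = ⟪d, gradient g y⟫ := real_inner_comm _ _
      have h6 : ‖e - d‖ = dist e d := (dist_eq_norm e d).symm
      have h7 := abs_real_inner_le_norm (gradient g y) (e - d)
      have h8 := neg_abs_le ⟪gradient g y, e - d⟫
      rw [h6] at h7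
      nlinarith [hnorm, he, mul_le_mul_of_nonneg_left he.le hnorm.le]
  have hmono : ∀ e : EuclideanSpace ℝ (Fin n), dist e d < δ →
      ∀ x t, 0 ≤ t → (∀ s ∈ Icc (0:ℝ) t, x + s • e ∈ Metric.ball xb ρ) →
        g x ≤ g (x + t • e) :=
    fun e he x t ht hsegs => seg_mono hg hN0 (hgoodall e he) x t ht hsegs
  obtain ⟨e₀, he₀d, he₀⟩ : ∃ e₀ : EuclideanSpace ℝ (Fin n), dist e₀ d < δ ∧ e₀ ≠ 0 := by
    rcases eq_or_ne d 0 with hd0 | hd0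
    · obtain ⟨z, hz⟩ := exists_ne (0 : EuclideanSpace ℝ (Fin n))
      have hzn : 0 < ‖z‖ := norm_pos_iff.2 hz
      refine ⟨(δ / (2 * ‖z‖)) • z, ?_, smul_ne_zero (by positivity) hz⟩
      rw [hd0, dist_zero_right, norm_smul, Real.norm_eq_abs, abs_of_pos (by positivity)]
      have hcalc : δ / (2 * ‖z‖) * ‖z‖ = δ / 2 := by
        field_simp
      rw [hcalc]
      linarith
    · exact ⟨d, by simpa using hδpos, hd0⟩
  set Cone : Set (EuclideanSpace ℝ (Fin n)) :=
    ⋃ (t : ℝ) (_ : 0 < t), t • (Metric.ball d δ \ {0}) with hCone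
  have hConeOpen : IsOpen Cone := isOpen_iUnion fun t => isOpen_iUnion fun htpos =>
    (Metric.isOpen_ball.sdiff isClosed_singleton).smul₀ (ne_of_gt htpos)
  have hConeMem : ∀ w : EuclideanSpace ℝ (Fin n),
      w ∈ Cone ↔ ∃ t : ℝ, 0 < t ∧ ∃ e, dist e d < δ ∧ e ≠ 0 ∧ w = t • e := by
    intro w
    simp only [hCone, mem_iUnion, mem_smul_set, mem_diff, Metric.mem_ball,
      mem_singleton_iff]
    constructor
    · rintro ⟨t, ht, e, ⟨hed, he0⟩, rfl⟩
      exact ⟨t, ht, e, hed, he0, rfl⟩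
    · rintro ⟨t, ht, e, hed, he0, rfl⟩
      exact ⟨t, ht, e, ⟨hed, he0⟩, rfl⟩
  have hzero_mem : ∀ V : Set (EuclideanSpace ℝ (Fin n)), IsOpen V →
      (∀ y ∈ V, g y = g xb) → (∃ yk : ℕ → EuclideanSpace ℝ (Fin n),
        (∀ k, yk k ∈ V) ∧ Tendsto yk atTop (𝓝 xb)) → False := by
    rintro V hVopen hVconst ⟨yk, hykV, hyklim⟩
    have h0S : (0 : EuclideanSpace ℝ (Fin n)) ∈ S := by
      refine ⟨yk, fun _ => 0, fun k => Or.inr ⟨?_, rfl⟩, hyklim, tendsto_const_nhds⟩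
      have hVnhds : V ∈ 𝓝 (yk k) := hVopen.mem_nhds (hykV k)
      filter_upwards [hVnhds] with z hz
      rw [hVconst z hz, hVconst (yk k) (hykV k)]
    have := hφS 0 (subset_convexHull ℝ S h0S)
    rw [map_zero] at this
    linarith
  -- sequence construction helper
  have hseqcon : ∀ c : ℝ, c = 1 ∨ c = -1 →
      ∃ yk : ℕ → EuclideanSpace ℝ (Fin n),
        (∀ k, yk k ∈ ((fun w => xb + c • w) '' Cone) ∩ Metric.ball xb ρ) ∧
        Tendsto yk atTop (𝓝 xb) := by
    intro c hc
    have hcabs : |c| = 1 := by rcases hc with rfl | rfl <;> norm_num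
    set cc := ρ / (2 * ‖e₀‖ + 1) with hcc
    have h2e : (0:ℝ) < 2 * ‖e₀‖ + 1 := by positivity
    have hccpos : 0 < cc := by positivity
    have hccb : cc * ‖e₀‖ < ρ := by
      rw [hcc, div_mul_eq_mul_div, div_lt_iff₀ h2e]
      have he₀n : 0 < ‖e₀‖ := norm_pos_iff.2 he₀
      nlinarith
    refine ⟨fun k => xb + c • ((cc / ((k:ℝ) + 1)) • e₀), fun k => ?_, ?_⟩
    · constructor
      · refine ⟨(cc / ((k:ℝ) + 1)) • e₀, ?_, rfl⟩
        rw [hConeMem]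
        exact ⟨cc / ((k:ℝ) + 1), by positivity, e₀, he₀d, he₀, rfl⟩
      · rw [Metric.mem_ball, dist_eq_norm, add_sub_cancel_left, norm_smul, norm_smul,
          Real.norm_eq_abs, Real.norm_eq_abs, hcabs, one_mul,
          abs_of_pos (by positivity : (0:ℝ) < cc / ((k:ℝ) + 1))]
        have hk1 : (1:ℝ) ≤ (k:ℝ) + 1 := by
          have : (0:ℝ) ≤ (k:ℝ) := Nat.cast_nonneg k
          linarith
        have : cc / ((k:ℝ) + 1) ≤ cc := div_le_self hccpos.le hk1
        calc cc / ((k:ℝ) + 1) * ‖e₀‖ ≤ cc * ‖e₀‖ :=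
              mul_le_mul_of_nonneg_right this (norm_nonneg _)
          _ < ρ := hccb
    · have h1 : Tendsto (fun k : ℕ => cc / ((k:ℝ) + 1)) atTop (𝓝 0) := by
        have h2 : Tendsto (fun k : ℕ => cc * (1 / ((k:ℝ) + 1))) atTop (𝓝 (cc * 0)) :=
          tendsto_one_div_add_atTop_nhds_zero_nat.const_mul cc
        simpa [div_eq_mul_inv, mul_comm] using h2
      have h2 : Tendsto (fun k : ℕ => (cc / ((k:ℝ) + 1)) • e₀) atTop
          (𝓝 ((0:ℝ) • e₀)) := h1.smul_const e₀
      rw [zero_smul] at h2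
      have h3 : Tendsto (fun k : ℕ => xb + c • ((cc / ((k:ℝ) + 1)) • e₀)) atTop
          (𝓝 (xb + c • (0 : EuclideanSpace ℝ (Fin n)))) :=
        tendsto_const_nhds.add (h2.const_smul c)
      simpa using h3
  -- the two cases
  rcases hext with hminb | hmaxb
  · -- local minimum : use the cone behind xb
    set V := ((fun w => xb + (-1:ℝ) • w) '' Cone) ∩ Metric.ball xb ρ with hV
    have hVopen : IsOpen V := by
      have himg : (fun w => xb + (-1:ℝ) • w) '' Cone =
          (fun v => xb + v) '' ((-1:ℝ) • Cone) := by
        rw [← Set.image_smul, Set.image_image]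
      refine IsOpen.inter ?_ Metric.isOpen_ball
      rw [himg]
      exact (isOpenMap_add_left xb) _ (hConeOpen.smul₀ (by norm_num))
    have hVconst : ∀ y ∈ V, g y = g xb := by
      rintro y ⟨⟨w, hwCone, rfl⟩, hyball⟩
      obtain ⟨t, ht, e, hed, he0, rfl⟩ := (hConeMem w).1 hwCone
      have hdyxb : dist (xb + (-1:ℝ) • t • e) xb = t * ‖e‖ := by
        rw [dist_eq_norm, add_sub_cancel_left, norm_smul, norm_smul, Real.norm_eq_abs,
          Real.norm_eq_abs, abs_of_pos ht]
        norm_num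
      have hdball : t * ‖e‖ < ρ := by
        rw [← hdyxb]
        exact Metric.mem_ball.1 hyball
      have hseg' : ∀ s ∈ Icc (0:ℝ) t, (xb + (-1:ℝ) • t • e) + s • e ∈ Metric.ball xb ρ := by
        intro s hs
        have heq : (xb + (-1:ℝ) • t • e) + s • e = xb + (s - t) • e := by
          rw [neg_one_smul, sub_smul]
          abel
        rw [heq, Metric.mem_ball, dist_eq_norm, add_sub_cancel_left, norm_smul,
          Real.norm_eq_abs, abs_of_nonpos (by linarith [hs.2] : s - t ≤ 0)]
        calc -(s - t) * ‖e‖ ≤ t * ‖e‖ := by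
              apply mul_le_mul_of_nonneg_right _ (norm_nonneg _)
              linarith [hs.1]
          _ < ρ := hdball
      have hle : g (xb + (-1:ℝ) • t • e) ≤ g xb := by
        have h1 := hmono e hed (xb + (-1:ℝ) • t • e) t ht.le hseg'
        have heq : (xb + (-1:ℝ) • t • e) + t • e = xb := by
          rw [neg_one_smul]
          abel
        rwa [heq] at h1
      have hge : g xb ≤ g (xb + (-1:ℝ) • t • e) :=
        hminb _ (Metric.ball_subset_ball (min_le_right ρ₀ r₁) hyball)
      exact le_antisymm hle hge
    exact hzero_mem V hVopen hVconst (hseqcon (-1) (Or.inr rfl))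
  · -- local maximum : use the cone ahead of xb
    set V := ((fun w => xb + (1:ℝ) • w) '' Cone) ∩ Metric.ball xb ρ with hV
    have hVopen : IsOpen V := by
      have himg : (fun w => xb + (1:ℝ) • w) '' Cone =
          (fun v => xb + v) '' ((1:ℝ) • Cone) := by
        rw [← Set.image_smul, Set.image_image]
      refine IsOpen.inter ?_ Metric.isOpen_ball
      rw [himg]
      exact (isOpenMap_add_left xb) _ (hConeOpen.smul₀ (by norm_num))
    have hVconst : ∀ y ∈ V, g y = g xb := by
      rintro y ⟨⟨w, hwCone, rfl⟩, hyball⟩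
      obtain ⟨t, ht, e, hed, he0, rfl⟩ := (hConeMem w).1 hwCone
      have hdyxb : dist (xb + (1:ℝ) • t • e) xb = t * ‖e‖ := by
        rw [dist_eq_norm, add_sub_cancel_left, norm_smul, norm_smul, Real.norm_eq_abs,
          Real.norm_eq_abs, abs_of_pos ht]
        norm_num
      have hdball : t * ‖e‖ < ρ := by
        rw [← hdyxb]
        exact Metric.mem_ball.1 hyball
      have hseg' : ∀ s ∈ Icc (0:ℝ) t, xb + s • e ∈ Metric.ball xb ρ := by
        intro s hs
        rw [Metric.mem_ball, dist_eq_norm, add_sub_cancel_left, norm_smul,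
          Real.norm_eq_abs, abs_of_nonneg hs.1]
        calc s * ‖e‖ ≤ t * ‖e‖ := mul_le_mul_of_nonneg_right hs.2 (norm_nonneg _)
          _ < ρ := hdball
      have hge : g xb ≤ g (xb + (1:ℝ) • t • e) := by
        have h1 := hmono e hed xb t ht.le hseg'
        have heq : xb + t • e = xb + (1:ℝ) • t • e := by rw [one_smul]
        rwa [← heq]
      have hle : g (xb + (1:ℝ) • t • e) ≤ g xb :=
        hmaxb _ (Metric.ball_subset_ball (min_le_right ρ₀ r₁) hyball)
      exact le_antisymm hle hge
    exact hzero_mem V hVopen hVconst (hseqcon 1 (Or.inl rfl))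

end Aux

/-- Fermat's rule for the normalized subdifferential: if `f` is locally Lipschitz and `xb` is a
local minimum or a local maximum of `f`, then `0 ∈ co ∇̂f(xb)`. -/
theorem stmt5 {n : ℕ} (f : EuclideanSpace ℝ (Fin n) → ℝ) (hf : LocallyLipschitz f)
    (xb : EuclideanSpace ℝ (Fin n)) (hxb : IsLocalMin f xb ∨ IsLocalMax f xb) :
    (0 : EuclideanSpace ℝ (Fin n)) ∈ convexHull ℝ (hGrad f xb) := by
  rcases subsingleton_or_nontrivial (EuclideanSpace ℝ (Fin n)) with hsub | hnt
  · have hloc : ∀ᶠ y in 𝓝 xb, f y = f xb :=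
      Filter.Eventually.of_forall fun y => by rw [Subsingleton.elim y xb]
    exact subset_convexHull ℝ _ (zero_mem_hGrad_of_locallyConstant hloc)
  · obtain ⟨Kc, t, htmem, hlip⟩ := hf xb
    obtain ⟨r, hr, hball⟩ := Metric.mem_nhds_iff.1 htmem
    have hlipball : LipschitzOnWith Kc f (Metric.ball xb r) := hlip.mono hball
    obtain ⟨g, hgglob, hfg⟩ := hlipball.extend_real
    have hfg_ev : f =ᶠ[𝓝 xb] g := by
      filter_upwards [Metric.ball_mem_nhds xb hr] with y hy
      exact hfg hy
    have hgxb : g xb = f xb := (hfg (Metric.mem_ball_self hr)).symm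
    have hxb' : IsLocalMin g xb ∨ IsLocalMax g xb := by
      rcases hxb with hmin | hmax
      · left
        show ∀ᶠ y in 𝓝 xb, g xb ≤ g y
        filter_upwards [hmin, hfg_ev] with y h1 h2
        rw [← h2, hgxb]
        exact h1
      · right
        show ∀ᶠ y in 𝓝 xb, g y ≤ g xb
        filter_upwards [hmax, hfg_ev] with y h1 h2
        rw [← h2, hgxb]
        exact h1
    have hmain := main_lip hgglob hxb'
    have hsub2 : hGrad g xb ⊆ hGrad f xb := by
      rintro v ⟨xs, vs, hm, hxs, hvs⟩
      have hev : ∀ᶠ k in atTop, xs k ∈ Metric.ball xb r := hxs (Metric.ball_mem_nhds xb hr)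
      obtain ⟨M, hM⟩ := eventually_atTop.1 hev
      refine ⟨fun k => xs (k + M), fun k => vs (k + M), fun k => ?_, ?_, ?_⟩
      · have hmem := hM (k + M) (Nat.le_add_left M k)
        have hcongr : tGrad f (xs (k + M)) = tGrad g (xs (k + M)) := tGrad_congr (by
          filter_upwards [Metric.isOpen_ball.mem_nhds hmem] with z hz
          exact hfg hz)
        rw [hcongr]
        exact hm (k + M)
      · exact hxs.comp (tendsto_add_atTop_nat M)
      · exact hvs.comp (tendsto_add_atTop_nat M)
    exact convexHull_mono hsub2 hmain
end

section
/- Let x : [a,b] → ℝⁿ be differentiable at almost every t ∈ [a,b], and let 𝒳 be a countable family of subsets of ℝⁿ. Then for almost every t ∈ [a,b] at which x is differentiable, the following holds: for every X ∈ 𝒳 with x(t) ∈ X, there exists a sequence tₖ → t with tₖ ≠ t and x(tₖ) ∈ X for all k; consequently either x'(t) or −x'(t) belongs to the tangent cone of X at x(t). -/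
open Filter Topology MeasureTheory

/-- The isolated points of any set of reals form a countable set. -/
lemma countable_isolated_points (s : Set ℝ) :
    {t | t ∈ s ∧ t ∉ closure (s \ {t})}.Countable := by
  have : {t | t ∈ s ∧ t ∉ closure (s \ {t})} ⊆
      ⋃ (p : ℚ) (q : ℚ), {t | t ∈ s ∩ Set.Ioo (p : ℝ) q ∧ s ∩ Set.Ioo (p : ℝ) q ⊆ {t}} := by
    rintro t ⟨hts, htc⟩
    rw [Metric.mem_closure_iff] at htc
    push_neg at htc
    obtain ⟨ε, hε, hb⟩ := htc
    obtain ⟨p, hp1, hp2⟩ := exists_rat_btwn (show t - ε < t by linarith)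
    obtain ⟨q, hq1, hq2⟩ := exists_rat_btwn (show t < t + ε by linarith)
    refine Set.mem_iUnion.2 ⟨p, Set.mem_iUnion.2 ⟨q, ⟨⟨hts, hp2, hq1⟩, ?_⟩⟩⟩
    rintro y ⟨hys, hy1, hy2⟩
    by_contra hyt
    have h1 := hb y ⟨hys, hyt⟩
    rw [Real.dist_eq] at h1
    have h2 : |t - y| < ε := abs_sub_lt_iff.2 ⟨by linarith, by linarith⟩
    linarith
  refine Set.Countable.mono this ?_
  refine Set.countable_iUnion fun p => Set.countable_iUnion fun q => ?_
  apply Set.Subsingleton.countable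
  rintro u ⟨hu1, hu2⟩ v ⟨hv1, hv2⟩
  have := hu2 hv1
  simpa using this.symm

/-- Let `x : [a,b] → ℝⁿ` be differentiable at almost every `t ∈ [a,b]` and let `𝒳` be a
countable family of subsets of `ℝⁿ`. Then for almost every `t ∈ [a,b]` at which `x` is
differentiable the following holds: for every `X ∈ 𝒳` containing `x t`, `t` is an accumulation
point of `{s ∈ [a,b] : x s ∈ X}`, and either `x'(t)` or `-x'(t)` lies in the tangent cone of `X`
at `x t`. -/
theorem stmt8 {n : ℕ} (a b : ℝ) (x : ℝ → EuclideanSpace ℝ (Fin n))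
    (𝒳 : Set (Set (EuclideanSpace ℝ (Fin n)))) (h𝒳 : 𝒳.Countable)
    (hdiff : ∀ᵐ t ∂(volume.restrict (Set.Icc a b)), DifferentiableAt ℝ x t) :
    ∀ᵐ t ∂(volume.restrict (Set.Icc a b)), DifferentiableAt ℝ x t →
      ∀ X ∈ 𝒳, x t ∈ X →
        (∃ ts : ℕ → ℝ, (∀ k, ts k ∈ Set.Icc a b ∧ ts k ≠ t ∧ x (ts k) ∈ X) ∧
          Tendsto ts atTop (𝓝 t)) ∧
        (deriv x t ∈ tangentConeAt ℝ X (x t) ∨ -deriv x t ∈ tangentConeAt ℝ X (x t)) := by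
  set A : Set (EuclideanSpace ℝ (Fin n)) → Set ℝ :=
    fun X => {s | s ∈ Set.Icc a b ∧ x s ∈ X} with hA
  set N : Set ℝ := ⋃ X ∈ 𝒳, {t | t ∈ A X ∧ t ∉ closure (A X \ {t})} with hN
  have hNc : N.Countable :=
    h𝒳.biUnion fun X _ => countable_isolated_points (A X)
  have hN0 : (volume.restrict (Set.Icc a b)) N = 0 := hNc.measure_zero _
  have hmem : ∀ᵐ t ∂(volume.restrict (Set.Icc a b)), t ∈ Set.Icc a b :=
    ae_restrict_mem measurableSet_Icc
  have hNae : ∀ᵐ t ∂(volume.restrict (Set.Icc a b)), t ∉ N :=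
    (ae_iff.2 (by simpa using hN0))
  filter_upwards [hmem, hNae] with t ht htN hdt X hX hxtX
  -- t is an accumulation point of A X
  have htA : t ∈ A X := ⟨ht, hxtX⟩
  have hacc : t ∈ closure (A X \ {t}) := by
    by_contra h
    exact htN (Set.mem_biUnion hX ⟨htA, h⟩)
  obtain ⟨ts, hts, htlim⟩ := mem_closure_iff_seq_limit.1 hacc
  have hts' : ∀ k, ts k ∈ Set.Icc a b ∧ ts k ≠ t ∧ x (ts k) ∈ X := fun k =>
    ⟨(hts k).1.1, (hts k).2, (hts k).1.2⟩
  refine ⟨⟨ts, hts', htlim⟩, Or.inl ?_⟩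
  -- tangent cone membership with c k = (ts k - t)⁻¹
  refine mem_tangentConeAt_iff_exists_seq_norm_tendsto_atTop.2 ⟨fun k => (ts k - t)⁻¹, fun k => x (ts k) - x t, ?_, ?_, ?_⟩
  swap
  · exact Eventually.of_forall fun k => by
      simpa using (hts' k).2.2
  · have h1 : Tendsto (fun k => |ts k - t|) atTop (𝓝[>] 0) := by
      apply tendsto_nhdsWithin_of_tendsto_nhds_of_eventually_within
      · have h0 : Tendsto (fun k => ts k - t) atTop (𝓝 0) := by
          simpa using htlim.sub_const t
        simpa [Function.comp_def] using (continuous_abs.tendsto 0).comp h0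
      · exact Eventually.of_forall fun k =>
          abs_pos.2 (sub_ne_zero.2 (hts' k).2.1)
    have := tendsto_inv_nhdsGT_zero.comp h1
    simpa [Real.norm_eq_abs, abs_inv, Function.comp_def] using this
  · have hd : HasDerivAt x (deriv x t) t := hdt.hasDerivAt
    have hs := hasDerivAt_iff_tendsto_slope.1 hd
    have htl : Tendsto ts atTop (𝓝[≠] t) := by
      apply tendsto_nhdsWithin_of_tendsto_nhds_of_eventually_within _ htlim
      exact Eventually.of_forall fun k => (hts' k).2.1
    have := hs.comp htl
    simpa [slope_def_module, Function.comp_def, slope] using this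
end

section
/- Let f : ℝⁿ → ℝ be locally Lipschitz, let U ⊆ ℝⁿ, and let g : ℝⁿ → ℝ be differentiable at every point of U. Assume g is d-Lyapunov for −∇̂f on U, i.e., there exists ᾱ > 0 such that for all α ∈ (0,ᾱ], all x ∈ U, and all u ∈ ∇̂f(x), one has g(x − αu) ≤ g(x). Then ⟨v, ∇g(x)⟩ ≥ 0 for every x ∈ U and every v ∈ ∂̄f(x) = co ∇̄f(x). -/
open Filter Topology
open scoped RealInnerProductSpace ENNReal

private lemma dirDeriv_nonneg {n : ℕ} (g : EuclideanSpace ℝ (Fin n) → ℝ)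
    (x u : EuclideanSpace ℝ (Fin n))
    (hg : DifferentiableAt ℝ g x) (ab : ℝ) (hab : 0 < ab)
    (h : ∀ α ∈ Set.Ioc (0:ℝ) ab, g (x - α • u) ≤ g x) : 0 ≤ ⟪u, gradient g x⟫ := by
  have hL : HasDerivAt (fun α : ℝ => x - α • u) (-u) 0 := by
    simpa using ((hasDerivAt_id (0:ℝ)).smul_const u).const_sub x
  have hφ : HasDerivAt (fun α : ℝ => g (x - α • u)) (⟪gradient g x, -u⟫) 0 := by
    have hg' : HasFDerivAt g ((InnerProductSpace.toDual ℝ (EuclideanSpace ℝ (Fin n))) (gradient g x)) ((fun α : ℝ => x - α • u) 0) := by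
      simpa using hg.hasGradientAt.hasFDerivAt
    have := hg'.comp_hasDerivAt 0 hL
    exact this
  have hslope : Tendsto (slope (fun α : ℝ => g (x - α • u)) 0) (𝓝[>] 0) (𝓝 (⟪gradient g x, -u⟫)) :=
    (hasDerivAt_iff_tendsto_slope.mp hφ).mono_left (nhdsWithin_mono _ (fun a ha => ne_of_gt ha))
  have hle : ⟪gradient g x, -u⟫ ≤ 0 := by
    refine le_of_tendsto hslope ?_
    filter_upwards [Ioo_mem_nhdsGT_of_mem ⟨le_refl (0:ℝ), hab⟩] with a ha
    have := h a ⟨ha.1, ha.2.le⟩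
    rw [slope_def_field]
    simp only [sub_zero, zero_smul, sub_zero] at *
    exact div_nonpos_of_nonpos_of_nonneg (by simpa using sub_nonpos.2 this) ha.1.le
  rw [real_inner_comm]
  simpa [inner_neg_right] using hle

/-- If `f` is locally Lipschitz, `g` is differentiable on `U`, and `g` is d-Lyapunov for
`-∇̂f` on `U` (one-step decrease for all sufficiently small step sizes), then
`⟨v, ∇g(x)⟩ ≥ 0` for every `x ∈ U` and every `v ∈ ∂̄f(x) = co ∇̄f(x)`. -/
theorem stmt9 {n : ℕ} (f : EuclideanSpace ℝ (Fin n) → ℝ) (hf : LocallyLipschitz f)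
    (U : Set (EuclideanSpace ℝ (Fin n))) (g : EuclideanSpace ℝ (Fin n) → ℝ)
    (hg : ∀ x ∈ U, DifferentiableAt ℝ g x)
    (hLyap : ∃ ab : ℝ, 0 < ab ∧ ∀ α ∈ Set.Ioc (0 : ℝ) ab, ∀ x ∈ U, ∀ u ∈ hGrad f x,
      g (x - α • u) ≤ g x) :
    ∀ x ∈ U, ∀ v ∈ convexHull ℝ (bGrad f x), 0 ≤ ⟪v, gradient g x⟫ := by

  obtain ⟨ab, hab, hLy⟩ := hLyap
  intro x hx v hv
  have hconv : Convex ℝ {w : EuclideanSpace ℝ (Fin n) | 0 ≤ ⟪w, gradient g x⟫} := by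
    exact convex_halfSpace_ge ⟨fun a b => inner_add_left a b _,
      fun c a => real_inner_smul_left a _ c⟩ 0
  refine convexHull_min (fun w hw => ?_) hconv hv
  obtain ⟨xs, hdiff, hxs, hvs⟩ := hw
  by_cases hw0 : w = 0
  · simp [hw0]
  have hwn : ‖w‖ ≠ 0 := norm_ne_zero_iff.2 hw0
  have hev : ∀ᶠ k in atTop, gradient f (xs k) ≠ 0 :=
    hvs.eventually (isOpen_compl_singleton.eventually_mem hw0)
  obtain ⟨N, hN⟩ := eventually_atTop.mp hev
  set u : EuclideanSpace ℝ (Fin n) := ‖w‖⁻¹ • w with hu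
  have hmemu : u ∈ hGrad f x := by
    refine ⟨fun k => xs (k + N),
      fun k => ‖gradient f (xs (k + N))‖⁻¹ • gradient f (xs (k + N)), fun k => ?_, ?_, ?_⟩
    · exact Or.inl ⟨hdiff _, hN _ (Nat.le_add_left N k), rfl⟩
    · exact hxs.comp (tendsto_add_atTop_nat N)
    · have hv' : Tendsto (fun k => gradient f (xs (k + N))) atTop (𝓝 w) :=
        hvs.comp (tendsto_add_atTop_nat N)
      exact (hv'.norm.inv₀ hwn).smul hv'
  have key : 0 ≤ ⟪u, gradient g x⟫ :=
    dirDeriv_nonneg g x u (hg x hx) ab hab (fun α hα => hLy α hα x hx u hmemu)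
  have : ⟪u, gradient g x⟫ = ‖w‖⁻¹ * ⟪w, gradient g x⟫ := real_inner_smul_left _ _ _
  rw [this] at key
  have := mul_nonneg (le_of_lt (by positivity : (0:ℝ) < ‖w‖)) key
  rw [← mul_assoc, mul_inv_cancel₀ hwn, one_mul] at this
  exact this
end

section
/- Let f : ℝⁿ → ℝ, let x̄ ∈ ℝⁿ, and let C : ℝⁿ → ℝᵐ be differentiable at x̄ with derivative C'(x̄). Assume: (a) x̄ is a local minimum of f; (b) every unit vector w ∈ ℝⁿ that is a limit of (xₖ − x̄)/|xₖ − x̄| for some sequence xₖ → x̄ with xₖ ≠ x̄ and f(xₖ) = f(x̄) is orthogonal to every element of ∇̂f(x̄); (c) ℝⁿ = span ∇̂f(x̄) + Im C'(x̄)*, the sum of the linear span of ∇̂f(x̄) and the range of the adjoint of C'(x̄). Then x̄ is a strict local minimum of the function x ↦ f(x) + |C(x) − C(x̄)|²/4, i.e., f(x) + |C(x) − C(x̄)|²/4 > f(x̄) for all x ≠ x̄ in some punctured neighborhood of x̄. -/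
open Filter Topology
open scoped RealInnerProductSpace ENNReal

/-- If `xb` is a local minimum of `f`, every unit limit direction of the level set
`[f = f(xb)]` at `xb` is orthogonal to `∇̂f(xb)` (normalized projection formula), `C` is
differentiable at `xb`, and `ℝⁿ = span ∇̂f(xb) + Im C'(xb)*`, then `xb` is a strict local
minimum of `x ↦ f(x) + ‖C(x) - C(xb)‖²/4`. -/
theorem stmt10 {n m : ℕ} (f : EuclideanSpace ℝ (Fin n) → ℝ) (xb : EuclideanSpace ℝ (Fin n))
    (C : EuclideanSpace ℝ (Fin n) → EuclideanSpace ℝ (Fin m))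
    (C' : EuclideanSpace ℝ (Fin n) →L[ℝ] EuclideanSpace ℝ (Fin m))
    (hC : HasFDerivAt C C' xb)
    (hmin : IsLocalMin f xb)
    (hproj : ∀ w : EuclideanSpace ℝ (Fin n), ‖w‖ = 1 →
      (∃ xs : ℕ → EuclideanSpace ℝ (Fin n), (∀ k, xs k ≠ xb ∧ f (xs k) = f xb) ∧
        Tendsto xs atTop (𝓝 xb) ∧
        Tendsto (fun k => ‖xs k - xb‖⁻¹ • (xs k - xb)) atTop (𝓝 w)) →
      ∀ u ∈ hGrad f xb, ⟪w, u⟫ = 0)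
    (hspan : Submodule.span ℝ (hGrad f xb) ⊔
      LinearMap.range ((ContinuousLinearMap.adjoint C').toLinearMap) = ⊤) :
    ∃ ε > 0, ∀ x ∈ Metric.ball xb ε, x ≠ xb →
      f xb < f x + ‖C x - C xb‖ ^ 2 / 4 := by
  by_contra hcon
  push_neg at hcon
  -- local min gives a ball where f xb ≤ f
  obtain ⟨δ, hδ, hδmin⟩ := Metric.eventually_nhds_iff_ball.mp hmin
  -- build a sequence
  have hseq : ∀ k : ℕ, ∃ x, x ∈ Metric.ball xb (min δ (1 / (k + 1))) ∧ x ≠ xb ∧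
      f x + ‖C x - C xb‖ ^ 2 / 4 ≤ f xb := by
    intro k
    obtain ⟨x, hx1, hx2, hx3⟩ := hcon (min δ (1 / (k + 1))) (lt_min hδ (by positivity))
    exact ⟨x, hx1, hx2, hx3⟩
  choose xs hball hne hle using hseq
  have hballδ : ∀ k, xs k ∈ Metric.ball xb δ := fun k =>
    Metric.ball_subset_ball (min_le_left _ _) (hball k)
  have hfge : ∀ k, f xb ≤ f (xs k) := fun k => hδmin _ (hballδ k)
  have hfeq : ∀ k, f (xs k) = f xb := by
    intro k
    have h1 : (0:ℝ) ≤ ‖C (xs k) - C xb‖ ^ 2 / 4 := by positivity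
    linarith [hle k, hfge k]
  have hCeq : ∀ k, C (xs k) = C xb := by
    intro k
    have h1 : ‖C (xs k) - C xb‖ ^ 2 / 4 ≤ 0 := by linarith [hle k, hfge k]
    have h2 : ‖C (xs k) - C xb‖ = 0 := by nlinarith [norm_nonneg (C (xs k) - C xb)]
    have := norm_eq_zero.mp h2
    rwa [sub_eq_zero] at this
  have hxs : Tendsto xs atTop (𝓝 xb) := by
    rw [tendsto_iff_dist_tendsto_zero]
    apply squeeze_zero (fun k => dist_nonneg) (fun k => ?_) tendsto_one_div_add_atTop_nhds_zero_nat
    exact le_of_lt (lt_of_lt_of_le (hball k) (min_le_right _ _))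
  -- the normalized directions
  set ws : ℕ → EuclideanSpace ℝ (Fin n) := fun k => ‖xs k - xb‖⁻¹ • (xs k - xb) with hws
  have hwnorm : ∀ k, ‖ws k‖ = 1 := by
    intro k
    have h0 : xs k - xb ≠ 0 := sub_ne_zero.mpr (hne k)
    rw [hws]
    simp only [norm_smul, norm_inv, norm_norm]
    exact inv_mul_cancel₀ (norm_ne_zero_iff.mpr h0)
  have hwsph : ∀ k, ws k ∈ Metric.sphere (0 : EuclideanSpace ℝ (Fin n)) 1 := by
    intro k; simpa using hwnorm k
  obtain ⟨w, hwmem, φ, hφ, hwconv⟩ :=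
    (isCompact_sphere (0 : EuclideanSpace ℝ (Fin n)) 1).tendsto_subseq hwsph
  have hwnorm1 : ‖w‖ = 1 := by simpa using hwmem
  -- w is orthogonal to hGrad f xb
  have horth : ∀ u ∈ hGrad f xb, ⟪w, u⟫ = 0 := by
    refine hproj w hwnorm1 ⟨xs ∘ φ, fun k => ⟨hne (φ k), hfeq (φ k)⟩,
      hxs.comp hφ.tendsto_atTop, ?_⟩
    exact hwconv
  -- C' w = 0
  have hCw : C' w = 0 := by
    have hCf : HasFDerivAt C C' xb := hC
    have hlo := hCf.isLittleO.comp_tendsto (hxs.comp hφ.tendsto_atTop)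
    have hlo2 : (fun k => C' (xs (φ k) - xb)) =o[atTop] fun k => xs (φ k) - xb := by
      have : (fun k => C (xs (φ k)) - C xb - C' (xs (φ k) - xb)) =o[atTop]
          fun k => xs (φ k) - xb := hlo
      have heq : (fun k => C (xs (φ k)) - C xb - C' (xs (φ k) - xb)) =
          fun k => -(C' (xs (φ k) - xb)) := by
        funext k; rw [hCeq (φ k)]; abel
      rw [heq] at this
      simpa using this.neg_left
    have h0 : Tendsto (fun k => C' (ws (φ k))) atTop (𝓝 0) := by
      rw [NormedAddCommGroup.tendsto_nhds_zero]
      intro ε hε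
      filter_upwards [Asymptotics.isLittleO_iff.mp hlo2 (half_pos hε)] with k hk
      have hnz : ‖xs (φ k) - xb‖ ≠ 0 := norm_ne_zero_iff.mpr (sub_ne_zero.mpr (hne (φ k)))
      have : ‖C' (ws (φ k))‖ = ‖xs (φ k) - xb‖⁻¹ * ‖C' (xs (φ k) - xb)‖ := by
        rw [hws]; simp [map_smul, norm_smul]
      rw [this]
      calc ‖xs (φ k) - xb‖⁻¹ * ‖C' (xs (φ k) - xb)‖
          ≤ ‖xs (φ k) - xb‖⁻¹ * (ε / 2 * ‖xs (φ k) - xb‖) := by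
            apply mul_le_mul_of_nonneg_left hk (by positivity)
        _ = ε / 2 := by field_simp
        _ < ε := half_lt_self hε
    have h1 : Tendsto (fun k => C' (ws (φ k))) atTop (𝓝 (C' w)) :=
      (C'.continuous.tendsto w).comp hwconv
    exact tendsto_nhds_unique h1 h0
  -- w orthogonal to everything
  have hsub : Submodule.span ℝ (hGrad f xb) ⊔
      LinearMap.range ((ContinuousLinearMap.adjoint C').toLinearMap) ≤
      (Submodule.span ℝ {w})ᗮ := by
    apply sup_le
    · rw [Submodule.span_le]
      intro u hu
      rw [SetLike.mem_coe, Submodule.mem_orthogonal_singleton_iff_inner_left]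
      rw [real_inner_comm]
      exact horth u hu
    · rintro u ⟨y, rfl⟩
      rw [Submodule.mem_orthogonal_singleton_iff_inner_left, real_inner_comm]
      rw [ContinuousLinearMap.coe_coe, ContinuousLinearMap.adjoint_inner_right, hCw]
      simp
  rw [hspan] at hsub
  have hwmem2 : w ∈ (Submodule.span ℝ {w})ᗮ := hsub Submodule.mem_top
  rw [Submodule.mem_orthogonal_singleton_iff_inner_left] at hwmem2
  have : w = 0 := by
    have := inner_self_eq_zero (𝕜 := ℝ).mp hwmem2
    exact this
  rw [this] at hwnorm1
  simp at hwnorm1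
end

section
/- Let U be an n×n real orthogonal matrix, let f : ℝⁿ → ℝ, and define f̃ : ℝⁿ → ℝ by f̃(x) = f(Ux). Then a point x ∈ ℝⁿ is a flat minimum of f if and only if Uᵀx is a flat minimum of f̃. -/
open Filter Topology Matrix
open scoped ENNReal

/-- The oscillation `f°(x,r) = sup {|f(y) - f(x)| : |y - x| ≤ r}`, valued in `[0,∞]`. -/
noncomputable def osc {n : ℕ} (f : EuclideanSpace ℝ (Fin n) → ℝ)
    (x : EuclideanSpace ℝ (Fin n)) (r : ℝ) : ℝ≥0∞ :=
  ⨆ y ∈ Metric.closedBall x r, ENNReal.ofReal |f y - f x|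

/-- The flatness preorder: `x ⪯_f y` iff `f°(x,r) ≤ f°(y,r)` for all small `r > 0`. -/
def flatLE {n : ℕ} (f : EuclideanSpace ℝ (Fin n) → ℝ) (x y : EuclideanSpace ℝ (Fin n)) : Prop :=
  ∃ rb > (0 : ℝ), ∀ r ∈ Set.Ioc (0 : ℝ) rb, osc f x r ≤ osc f y r

/-- `xb` is a flat point of `f`: it is minimal for `⪯_f` on a neighborhood of `xb` in the
level set `{x | f x = f xb}`. -/
def IsFlatPoint {n : ℕ} (f : EuclideanSpace ℝ (Fin n) → ℝ) (xb : EuclideanSpace ℝ (Fin n)) :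
    Prop :=
  ∃ s ∈ 𝓝[{x | f x = f xb}] xb, ∀ x ∈ s, flatLE f xb x

/-- A flat minimum is a local minimum that is flat. -/
def IsFlatMinimum {n : ℕ} (f : EuclideanSpace ℝ (Fin n) → ℝ)
    (xb : EuclideanSpace ℝ (Fin n)) : Prop :=
  IsLocalMin f xb ∧ IsFlatPoint f xb

section aux

variable {n : ℕ}

local notation "E" => EuclideanSpace ℝ (Fin n)

lemma osc_comp (e : E ≃ₗᵢ[ℝ] E) (f : E → ℝ) (y : E) (r : ℝ) :
    osc (fun z => f (e z)) y r = osc f (e y) r := by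
  unfold osc
  apply le_antisymm
  · refine iSup₂_le fun z hz => ?_
    refine le_iSup₂_of_le (e z) ?_ le_rfl
    simpa [Metric.mem_closedBall, e.dist_map] using hz
  · refine iSup₂_le fun w hw => ?_
    refine le_iSup₂_of_le (e.symm w) ?_ ?_
    · simp only [Metric.mem_closedBall] at hw ⊢
      rwa [← e.dist_map, e.apply_symm_apply]
    · simp

lemma flatLE_comp (e : E ≃ₗᵢ[ℝ] E) (f : E → ℝ) (a b : E) :
    flatLE (fun z => f (e z)) a b ↔ flatLE f (e a) (e b) := by
  unfold flatLE
  simp only [osc_comp]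

lemma isLocalMin_comp (e : E ≃ₗᵢ[ℝ] E) (f : E → ℝ) (a : E) :
    IsLocalMin f (e a) → IsLocalMin (fun z => f (e z)) a := by
  intro h
  have hm : 𝓝 (e a) = Filter.map e (𝓝 a) := (e.toHomeomorph.map_nhds_eq a).symm
  unfold IsLocalMin IsMinFilter at h ⊢
  rw [hm, eventually_map] at h
  exact h

lemma isFlatPoint_comp (e : E ≃ₗᵢ[ℝ] E) (f : E → ℝ) (a : E) :
    IsFlatPoint f (e a) → IsFlatPoint (fun z => f (e z)) a := by
  rintro ⟨s, hs, hflat⟩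
  refine ⟨e ⁻¹' s, ?_, fun y hy => ?_⟩
  · have : {z : E | f (e z) = f (e a)} = e ⁻¹' {x | f x = f (e a)} := rfl
    rw [this]
    have hmap : Filter.map e (𝓝[e ⁻¹' {x | f x = f (e a)}] a)
        = 𝓝[{x | f x = f (e a)}] (e a) := by
      rw [show (⇑e : E → E) = ⇑e.toHomeomorph from rfl,
        e.toHomeomorph.isEmbedding.map_nhdsWithin_eq]
      simp only [LinearIsometryEquiv.coe_toHomeomorph]
      rw [Set.image_preimage_eq _ e.surjective]
    have : s ∈ Filter.map e (𝓝[e ⁻¹' {x | f x = f (e a)}] a) := by rw [hmap]; exact hs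
    exact this
  · rw [flatLE_comp]
    exact hflat _ hy

lemma isFlatMinimum_comp (e : E ≃ₗᵢ[ℝ] E) (f : E → ℝ) (a : E) :
    IsFlatMinimum f (e a) → IsFlatMinimum (fun z => f (e z)) a := fun h =>
  ⟨isLocalMin_comp e f a h.1, isFlatPoint_comp e f a h.2⟩

end aux

/-- For an orthogonal matrix `U` and `f̃(x) = f(Ux)`, a point `x` is a flat minimum of `f`
iff `Uᵀx` is a flat minimum of `f̃`. -/
theorem stmt11 {n : ℕ} (U : Matrix (Fin n) (Fin n) ℝ) (hU : Uᵀ * U = 1)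
    (f : EuclideanSpace ℝ (Fin n) → ℝ) (x : EuclideanSpace ℝ (Fin n)) :
    IsFlatMinimum f x ↔
    IsFlatMinimum (fun y => f (Matrix.toEuclideanLin U y)) (Matrix.toEuclideanLin Uᵀ x) := by
  have hU' : U * Uᵀ = 1 := mul_eq_one_comm.mp hU
  -- composition identities
  have hcomp : ∀ (M N : Matrix (Fin n) (Fin n) ℝ) (v : EuclideanSpace ℝ (Fin n)),
      Matrix.toEuclideanLin M (Matrix.toEuclideanLin N v) = Matrix.toEuclideanLin (M * N) v := by
    intro M N v
    simp [Matrix.toEuclideanLin_apply, Matrix.mulVec_mulVec]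
  have hone : ∀ v : EuclideanSpace ℝ (Fin n),
      Matrix.toEuclideanLin (1 : Matrix (Fin n) (Fin n) ℝ) v = v := by
    intro v
    simp [Matrix.toEuclideanLin_apply]
  have hadj : Matrix.toEuclideanLin Uᵀ = LinearMap.adjoint (Matrix.toEuclideanLin U) := by
    rw [← Matrix.toEuclideanLin_conjTranspose_eq_adjoint,
      Matrix.conjTranspose_eq_transpose_of_trivial]
  have hinner : ∀ v w : EuclideanSpace ℝ (Fin n),
      (inner ℝ (Matrix.toEuclideanLin U v) (Matrix.toEuclideanLin U w) : ℝ) = inner ℝ v w := by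
    intro v w
    rw [← LinearMap.adjoint_inner_right, ← hadj, hcomp, hU, hone]
  -- build the isometry equivalence
  let e' : EuclideanSpace ℝ (Fin n) ≃ₗ[ℝ] EuclideanSpace ℝ (Fin n) :=
    LinearEquiv.ofLinear (Matrix.toEuclideanLin U) (Matrix.toEuclideanLin Uᵀ)
      (by ext v; simp [hcomp, hU', hone]) (by ext v; simp [hcomp, hU, hone])
  let e : EuclideanSpace ℝ (Fin n) ≃ₗᵢ[ℝ] EuclideanSpace ℝ (Fin n) :=
    e'.isometryOfInner hinner
  have he : ∀ v, e v = Matrix.toEuclideanLin U v := fun v => rfl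
  have hsymm : ∀ v, e.symm v = Matrix.toEuclideanLin Uᵀ v := fun v => rfl
  constructor
  · intro h
    have : IsFlatMinimum f (e (e.symm x)) := by rwa [e.apply_symm_apply]
    have := isFlatMinimum_comp e f (e.symm x) this
    simpa [he, hsymm] using this
  · intro h
    have h' : IsFlatMinimum (fun y => f (Matrix.toEuclideanLin U y)) (e.symm x) := by
      rwa [hsymm]
    have h3 := isFlatMinimum_comp e.symm (fun y => f (Matrix.toEuclideanLin U y)) x h'
    have heq : (fun z => f (Matrix.toEuclideanLin U (e.symm z))) = f := by
      funext z
      rw [← he, e.apply_symm_apply]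
    rwa [heq] at h3
end

section
/- Let f : ℝⁿ → ℝ, let D ⊆ ℝⁿ be open, and let g : ℝⁿ → ℝ be continuously differentiable on D. Then the following are equivalent: (i) for every x ∈ D and every v ∈ ∇̄f(x), ⟨∇g(x), v⟩ ≥ 0; (ii) for every x ∈ D and every u ∈ ∇̂f(x), ⟨∇g(x), u⟩ ≥ 0. -/
/-!
Both conditions only see directions of gradients of `f`. An element of `∇̃f(y)` is a nonnegative
multiple of a gradient `∇f(y) ∈ ∇̄f(y)`, and `⟨∇g, ·⟩` is continuous near `x ∈ D`, so (i) passes to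
the limits defining `∇̂f(x)`. Conversely, a nonzero `v ∈ ∇̄f(x)` is a limit of nonzero gradients,
whose normalizations converge to `v / |v| ∈ ∇̂f(x)`, and (ii) at `v / |v|` gives (i) at `v`.
-/

open Filter Topology
open scoped RealInnerProductSpace ENNReal

lemma ContDiffAt.continuousAt_gradient {E : Type*} [NormedAddCommGroup E]
    [InnerProductSpace ℝ E] [CompleteSpace E] {g : E → ℝ} {y : E} (hg : ContDiffAt ℝ 1 g y) :
    ContinuousAt (gradient g) y :=
  (InnerProductSpace.toDual ℝ E).symm.continuous.continuousAt.comp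
    (hg.continuousAt_fderiv one_ne_zero)

section

variable {n : ℕ} {f : EuclideanSpace ℝ (Fin n) → ℝ} {x : EuclideanSpace ℝ (Fin n)}

lemma inner_nonneg_of_mem_tGrad {a v : EuclideanSpace ℝ (Fin n)}
    (h : ∀ w ∈ bGrad f x, 0 ≤ ⟪a, w⟫) (hv : v ∈ tGrad f x) : 0 ≤ ⟪a, v⟫ := by
  rcases hv with ⟨hdiff, -, rfl⟩ | ⟨-, rfl⟩
  · have hgrad : gradient f x ∈ bGrad f x :=
      ⟨fun _ => x, fun _ => hdiff, tendsto_const_nhds, tendsto_const_nhds⟩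
    rw [real_inner_smul_right]
    exact mul_nonneg (by positivity) (h _ hgrad)
  · rw [inner_zero_right]

lemma inner_nonneg_of_mem_hGrad {a : EuclideanSpace ℝ (Fin n) → EuclideanSpace ℝ (Fin n)}
    {u : EuclideanSpace ℝ (Fin n)} (ha : ContinuousAt a x)
    (h : ∀ᶠ y in 𝓝 x, ∀ v ∈ tGrad f y, 0 ≤ ⟪a y, v⟫) (hu : u ∈ hGrad f x) :
    0 ≤ ⟪a x, u⟫ := by
  obtain ⟨xs, vs, hmem, hxs, hvs⟩ := hu
  refine ge_of_tendsto ((ha.tendsto.comp hxs).inner hvs) ?_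
  filter_upwards [hxs h] with k hk
  exact hk _ (hmem k)

lemma inv_norm_smul_mem_hGrad {v : EuclideanSpace ℝ (Fin n)} (hv : v ∈ bGrad f x)
    (hv0 : v ≠ 0) : ‖v‖⁻¹ • v ∈ hGrad f x := by
  obtain ⟨xs, hdiff, hxs, hgrad⟩ := hv
  have hne : ∀ᶠ k in atTop, gradient f (xs k) ≠ 0 := hgrad.eventually_ne hv0
  obtain ⟨N, hN⟩ := hne.exists_forall_of_atTop
  have hnormalize : ContinuousAt (fun w : EuclideanSpace ℝ (Fin n) => ‖w‖⁻¹ • w) v :=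
    (continuous_norm.continuousAt.inv₀ (norm_ne_zero_iff.mpr hv0)).smul continuousAt_id
  refine ⟨fun k => xs (k + N), fun k => ‖gradient f (xs (k + N))‖⁻¹ • gradient f (xs (k + N)),
    fun k => Or.inl ⟨hdiff _, hN _ (Nat.le_add_left N k), rfl⟩,
    hxs.comp (tendsto_add_atTop_nat N), ?_⟩
  exact hnormalize.tendsto.comp (hgrad.comp (tendsto_add_atTop_nat N))

end

/-- For `D` open and `g` continuously differentiable on `D`, the first-order condition
`⟨∇g(x), v⟩ ≥ 0` for all `v ∈ ∇̄f(x)` on `D` is equivalent to `⟨∇g(x), u⟩ ≥ 0` for all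
`u ∈ ∇̂f(x)` on `D`. -/
theorem stmt14 {n : ℕ} (f : EuclideanSpace ℝ (Fin n) → ℝ)
    (D : Set (EuclideanSpace ℝ (Fin n))) (hD : IsOpen D)
    (g : EuclideanSpace ℝ (Fin n) → ℝ) (hg : ContDiffOn ℝ 1 g D) :
    (∀ x ∈ D, ∀ v ∈ bGrad f x, 0 ≤ ⟪gradient g x, v⟫) ↔
    (∀ x ∈ D, ∀ u ∈ hGrad f x, 0 ≤ ⟪gradient g x, u⟫) := by
  constructor
  · intro hb x hx u hu
    refine inner_nonneg_of_mem_hGrad (hg.contDiffAt (hD.mem_nhds hx)).continuousAt_gradient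
      ?_ hu
    filter_upwards [hD.mem_nhds hx] with y hy v hv
    exact inner_nonneg_of_mem_tGrad (hb y hy) hv
  · intro hh x hx v hv
    rcases eq_or_ne v 0 with rfl | hv0
    · rw [inner_zero_right]
    have h := hh x hx _ (inv_norm_smul_mem_hGrad hv hv0)
    rw [real_inner_smul_right] at h
    exact nonneg_of_mul_nonneg_right h (by positivity)
end

section
/- Let f(x,y) = (x² − y)² and g(x,y) = x² e^{4y} on ℝ². Then ⟨∇g(x,y), ∇f(x,y)⟩ = 0 for all (x,y) ∈ ℝ² (so g is a conserved quantity of the gradient flow of f), and f(x,y) + g(x,y) ≥ (x² + y)² + x² for all (x,y) ∈ ℝ²; in particular f + g is coercive and its unique global minimum is (0,0), the flat minimum of f. -/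
/-!
The orthogonality of the gradients is a polynomial identity in `x` and `e^{4y}`.
Since `(x² + y)² - (x² - y)² = 4x²y`, the inequality reads `x²(1 + 4y) ≤ x²e^{4y}`,
i.e. `1 + t ≤ e^t`. The lower bound `(x² + y)² + x²` controls `|x|` and `|y|`, hence gives
coercivity, and it vanishes only at the origin, where `f + g` vanishes too.
-/

open Filter Real

lemma sq_add_add_sq_le_sq_sub_add_mul_exp (x y : ℝ) :
    (x ^ 2 + y) ^ 2 + x ^ 2 ≤ (x ^ 2 - y) ^ 2 + x ^ 2 * exp (4 * y) :=
  calc (x ^ 2 + y) ^ 2 + x ^ 2 = (x ^ 2 - y) ^ 2 + x ^ 2 * (4 * y + 1) := by ring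
    _ ≤ (x ^ 2 - y) ^ 2 + x ^ 2 * exp (4 * y) := by gcongr; exact add_one_le_exp _

lemma norm_sub_one_le_sq_add_add_sq (p : ℝ × ℝ) : ‖p‖ - 1 ≤ (p.1 ^ 2 + p.2) ^ 2 + p.1 ^ 2 := by
  obtain ⟨x, y⟩ := p
  have hx : |x| ≤ x ^ 2 + 1 := by nlinarith [sq_abs x, sq_nonneg (|x| - 1)]
  have hy : |y| ≤ (x ^ 2 + y) ^ 2 + x ^ 2 + 1 := by
    have : |x ^ 2 + y| ≤ (x ^ 2 + y) ^ 2 + 1 := by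
      nlinarith [sq_abs (x ^ 2 + y), sq_nonneg (|x ^ 2 + y| - 1)]
    calc |y| = |(x ^ 2 + y) - x ^ 2| := by ring_nf
      _ ≤ |x ^ 2 + y| + |x ^ 2| := abs_sub _ _
      _ ≤ (x ^ 2 + y) ^ 2 + x ^ 2 + 1 := by rw [abs_of_nonneg (sq_nonneg x)]; linarith
  rw [Prod.norm_def, Real.norm_eq_abs, Real.norm_eq_abs, sub_le_iff_le_add, max_le_iff]
  constructor <;> nlinarith [sq_nonneg (x ^ 2 + y)]

/-- For `f(x,y) = (x² - y)²` and `g(x,y) = x²e^{4y}`: the gradients are orthogonal everywhere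
(so `g` is conserved by the gradient flow of `f`), `f + g ≥ (x² + y)² + x²`, `f + g` is
coercive, and its unique global minimum is `(0,0)`. -/
theorem stmt19 :
    (∀ x y : ℝ, (2 * x * Real.exp (4 * y)) * (2 * (x ^ 2 - y) * (2 * x)) +
        (4 * x ^ 2 * Real.exp (4 * y)) * (2 * (x ^ 2 - y) * (-1)) = 0) ∧
    (∀ x y : ℝ, (x ^ 2 + y) ^ 2 + x ^ 2 ≤ (x ^ 2 - y) ^ 2 + x ^ 2 * Real.exp (4 * y)) ∧
    Tendsto (fun p : ℝ × ℝ => (p.1 ^ 2 - p.2) ^ 2 + p.1 ^ 2 * Real.exp (4 * p.2))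
      (cocompact (ℝ × ℝ)) atTop ∧
    (∀ x y : ℝ,
      (0 ^ 2 - 0) ^ 2 + 0 ^ 2 * Real.exp (4 * 0) ≤ (x ^ 2 - y) ^ 2 + x ^ 2 * Real.exp (4 * y)) ∧
    (∀ x y : ℝ, (x ^ 2 - y) ^ 2 + x ^ 2 * Real.exp (4 * y) =
        (0 ^ 2 - 0) ^ 2 + 0 ^ 2 * Real.exp (4 * 0) → x = 0 ∧ y = 0) := by
  have lower := sq_add_add_sq_le_sq_sub_add_mul_exp
  refine ⟨fun x y => by ring, lower, ?_, fun x y => ?_, fun x y h => ?_⟩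
  · have norm_sub_one : Tendsto (fun p : ℝ × ℝ => ‖p‖ - 1) (cocompact (ℝ × ℝ)) atTop :=
      tendsto_atTop_add_const_right _ (-1) tendsto_norm_cocompact_atTop
    exact tendsto_atTop_mono
      (fun p => (norm_sub_one_le_sq_add_add_sq p).trans (lower p.1 p.2)) norm_sub_one
  · norm_num
    exact (by positivity : (0 : ℝ) ≤ (x ^ 2 + y) ^ 2 + x ^ 2).trans (lower x y)
  · norm_num at h
    have hx : x = 0 := by nlinarith [lower x y, sq_nonneg (x ^ 2 + y)]
    subst hx
    simpa using h
end
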